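/- arXiv:math/9611210 — 10 statements merged into one kernel-verified Lean document; each statement's English description precedes it below -/
import Mathlib

section
/- For every nonprincipal ultrafilter U on ℕ, the cofinality of the ultrapower U-prod ω is at least the groupwise density number 𝔤; that is, every set C of functions ℕ → ℕ that is cofinal with respect to ≤_U has cardinality at least 𝔤. -/
open Cardinal Set Filter

/-- A nonprincipal ultrafilter on ℕ: one that is not of the form `pure n`. -/
def Nonprincipal (U : Ultrafilter ℕ) : Prop := ∀ n : ℕ, U ≠ pure n

/-- `C` is cofinal in the ultrapower `U-prod ω` with respect to `≤_U`. -/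
def UCofinal (U : Ultrafilter ℕ) (C : Set (ℕ → ℕ)) : Prop :=
  ∀ f : ℕ → ℕ, ∃ g ∈ C, {n : ℕ | f n ≤ g n} ∈ U

/-- The cofinality of the ultrapower `U-prod ω`: the least cardinality of a
set of functions cofinal with respect to `≤_U`. -/
noncomputable def cfUProd (U : Ultrafilter ℕ) : Cardinal :=
  sInf {c : Cardinal | ∃ C : Set (ℕ → ℕ), UCofinal U C ∧ c = #C}

/-- The bounding number 𝔟. -/
noncomputable def boundingNumber : Cardinal :=
  sInf {c : Cardinal | ∃ B : Set (ℕ → ℕ),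
    (∀ f : ℕ → ℕ, ∃ g ∈ B, {n : ℕ | f n ≤ g n}.Infinite) ∧ c = #B}

/-- The dominating number 𝔡. -/
noncomputable def dominatingNumber : Cardinal :=
  sInf {c : Cardinal | ∃ D : Set (ℕ → ℕ),
    (∀ f : ℕ → ℕ, ∃ g ∈ D, {n : ℕ | ¬ f n ≤ g n}.Finite) ∧ c = #D}

/-- The splitting number 𝔰. -/
noncomputable def splittingNumber : Cardinal :=
  sInf {c : Cardinal | ∃ S : Set (Set ℕ),
    (∀ X : Set ℕ, X.Infinite → ∃ Y ∈ S, (X ∩ Y).Infinite ∧ (X \ Y).Infinite) ∧ c = #S}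

/-- A family of infinite subsets of ℕ is groupwise dense if it is closed under
infinite subsets and finite modifications and, for every partition of ℕ into
consecutive finite intervals (given by a strictly increasing sequence starting
at 0), the union of some infinitely many of the intervals is in the family. -/
def GroupwiseDense (G : Set (Set ℕ)) : Prop :=
  (∀ X ∈ G, X.Infinite) ∧
  (∀ X ∈ G, ∀ Y : Set ℕ, Y ⊆ X → Y.Infinite → Y ∈ G) ∧
  (∀ X ∈ G, ∀ Y : Set ℕ, (symmDiff X Y).Finite → Y ∈ G) ∧
  (∀ a : ℕ → ℕ, a 0 = 0 → StrictMono a →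
    ∃ K : Set ℕ, K.Infinite ∧ (⋃ k ∈ K, Set.Ico (a k) (a (k + 1))) ∈ G)

/-- The groupwise density number 𝔤. -/
noncomputable def groupwiseDensityNumber : Cardinal :=
  sInf {c : Cardinal | ∃ 𝒢 : Set (Set (Set ℕ)),
    (∀ G ∈ 𝒢, GroupwiseDense G) ∧ ⋂₀ 𝒢 = ∅ ∧ c = #𝒢}

/-- `U` is a pseudo-P_κ point. -/
def PseudoPPoint (U : Ultrafilter ℕ) (κ : Cardinal) : Prop :=
  ∀ F : Set (Set ℕ), (∀ A ∈ F, A ∈ U) → #F < κ →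
    ∃ A : Set ℕ, A.Infinite ∧ ∀ B ∈ F, (A \ B).Finite

/-- A finite-to-one function on ℕ. -/
def FinToOne (f : ℕ → ℕ) : Prop := ∀ n : ℕ, (f ⁻¹' {n}).Finite

/-- Two ultrafilters are nearly coherent if they have a common image under
finite-to-one maps. -/
def NearlyCoherent (U U' : Ultrafilter ℕ) : Prop :=
  ∃ f f' : ℕ → ℕ, FinToOne f ∧ FinToOne f' ∧
    Ultrafilter.map f U = Ultrafilter.map f' U'

/-- `nuX X n` is the least element of `X` greater than `n`. -/
noncomputable def nuX (X : Set ℕ) (n : ℕ) : ℕ := sInf {m : ℕ | m ∈ X ∧ n < m}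

/-!
For `h : ℕ → ℕ` let `G_h` (`gapFamily U h`) be the family of infinite `X ⊆ ℕ` such that the next
element of `X` after `n` exceeds `h n` for `U`-almost all `n`. If `C` is `≤_U`-cofinal, no set `X`
lies in every `G_ĝ`, `ĝ` the running maximum of some `g ∈ C` (take `g` above the successor
function of `X`), and each `ĝ` is monotone; so it suffices that `G_h` is groupwise dense for
monotone `h`. Given an interval partition, coarsen it to intervals `[b j, b (j + 1))` with
`h (b j) < b (j + 1)`; the residue of `j` mod 3 of the interval containing `n` is constant on a
set in `U`, say equal to `s`, and the intervals with `j ≡ s + 2` then form a set in `G_h`: the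
next such interval after `n` starts beyond `h n`.
-/

lemma Nonprincipal.le_cofinite {U : Ultrafilter ℕ} (hU : Nonprincipal U) :
    (U : Filter ℕ) ≤ cofinite :=
  U.le_cofinite_or_eq_pure.resolve_right fun ⟨n, hn⟩ => hU n hn

section nuX

variable {X Y : Set ℕ} {n m k : ℕ}

lemma nuX_mem_and_lt (hX : X.Infinite) (n : ℕ) : nuX X n ∈ X ∧ n < nuX X n :=
  Nat.sInf_mem (hX.exists_gt n)

lemma nuX_le (hm : m ∈ X) (hnm : n < m) : nuX X n ≤ m :=
  Nat.sInf_le ⟨hm, hnm⟩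

lemma nuX_le_nuX_of_subset (hY : Y.Infinite) (hYX : Y ⊆ X) (n : ℕ) : nuX X n ≤ nuX Y n :=
  nuX_le (hYX (nuX_mem_and_lt hY n).1) (nuX_mem_and_lt hY n).2

lemma lt_nuX_of_forall_lt (hX : X.Infinite) (h : ∀ m ∈ X, n < m → k < m) : k < nuX X n :=
  h _ (nuX_mem_and_lt hX n).1 (nuX_mem_and_lt hX n).2

lemma eventually_nuX_eq_of_finite_symmDiff (hXY : (symmDiff X Y).Finite) :
    ∀ᶠ n in cofinite, nuX X n = nuX Y n := by
  obtain ⟨B, hB⟩ := hXY.bddAbove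
  rw [Nat.cofinite_eq_atTop, eventually_atTop]
  refine ⟨B, fun n hn => congrArg sInf (ext fun m => and_congr_left fun hnm => ?_)⟩
  have hm : m ∉ symmDiff X Y := fun hm => by have := hB hm; omega
  rw [mem_symmDiff] at hm
  tauto

end nuX

lemma exists_strictMono_forall_lt_succ (f : ℕ → ℕ) :
    ∃ k : ℕ → ℕ, StrictMono k ∧ k 0 = 0 ∧ ∀ i, f (k i) < k (i + 1) := by
  let k : ℕ → ℕ := fun i => Nat.rec 0 (fun _ ki => max (ki + 1) (f ki + 1)) i
  have hk : ∀ i, k (i + 1) = max (k i + 1) (f (k i) + 1) := fun _ => rfl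
  refine ⟨k, strictMono_nat_of_lt_succ fun i => ?_, rfl, fun i => ?_⟩ <;> rw [hk] <;> omega

def blocksMod3 (b : ℕ → ℕ) (s : ℕ) : Set ℕ :=
  {m | ∃ j, j % 3 = s ∧ m ∈ Ico (b j) (b (j + 1))}

section blocksMod3

variable {b : ℕ → ℕ} (hb : StrictMono b)
include hb

lemma blocksMod3_infinite {s : ℕ} (hs : s < 3) : (blocksMod3 b s).Infinite :=
  infinite_of_forall_exists_gt fun m =>
    ⟨b (3 * (m + 1) + s), ⟨_, by omega, left_mem_Ico.2 (hb (lt_add_one _))⟩,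
      by have := hb.le_apply (x := 3 * (m + 1) + s); omega⟩

lemma exists_blocksMod3_mem (U : Ultrafilter ℕ) (hb0 : b 0 = 0) :
    ∃ s < 3, blocksMod3 b s ∈ U := by
  have hcover := iUnion_Ico_map_succ_eq_Ici (fun j => hb.monotone (Nat.zero_le j))
    hb.not_bddAbove_range_of_wellFoundedLT
  simp only [Order.succ_eq_add_one, Nat.bot_eq_zero, hb0] at hcover
  have hcovered : ∀ᶠ m in (U : Filter ℕ), ∃ s ∈ Iio 3, m ∈ blocksMod3 b s :=
    .of_forall fun m => by
      obtain ⟨j, hj⟩ := mem_iUnion.1 (hcover ▸ mem_Ici.2 (Nat.zero_le m))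
      exact ⟨j % 3, Nat.mod_lt _ (by norm_num), j, rfl, hj⟩
  exact (Ultrafilter.eventually_exists_mem_iff (finite_Iio 3)).1 hcovered

lemma lt_of_mem_blocksMod3 {h : ℕ → ℕ} (hh : Monotone h) (hhb : ∀ i, h (b i) < b (i + 1))
    {s n m : ℕ} (hn : n ∈ blocksMod3 b s) (hm : m ∈ blocksMod3 b ((s + 2) % 3))
    (hnm : n < m) : h n < m := by
  obtain ⟨j, rfl, hjn, hnj⟩ := hn
  obtain ⟨j', hj', hmj', hmj''⟩ := hm
  -- `j' ≢ j, j + 1 [MOD 3]`, and `j' < j` would put `m` below `n`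
  have hjj' : j + 2 ≤ j' := by
    by_contra!
    have := hb.monotone (show j' + 1 ≤ j by omega)
    omega
  calc h n ≤ h (b (j + 1)) := hh hnj.le
    _ < b (j + 2) := hhb _
    _ ≤ b j' := hb.monotone hjj'
    _ ≤ m := hmj'

end blocksMod3

def gapFamily (U : Ultrafilter ℕ) (h : ℕ → ℕ) : Set (Set ℕ) :=
  {X | X.Infinite ∧ ∀ᶠ n in (U : Filter ℕ), h n < nuX X n}

section gapFamily

variable {U : Ultrafilter ℕ} {h : ℕ → ℕ} {X Y : Set ℕ}

lemma mem_gapFamily_of_subset (hX : X ∈ gapFamily U h) (hYX : Y ⊆ X) (hY : Y.Infinite) :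
    Y ∈ gapFamily U h :=
  ⟨hY, hX.2.mono fun n hn => hn.trans_le (nuX_le_nuX_of_subset hY hYX n)⟩

lemma mem_gapFamily_of_finite_symmDiff (hU : Nonprincipal U) (hX : X ∈ gapFamily U h)
    (hXY : (symmDiff X Y).Finite) : Y ∈ gapFamily U h := by
  have hY : Y.Infinite := fun hY => hX.1 <| (hY.union hXY).subset fun x hx => by
    by_cases hxY : x ∈ Y
    · exact Or.inl hxY
    · exact Or.inr (mem_symmDiff.2 (Or.inl ⟨hx, hxY⟩))
  refine ⟨hY, ?_⟩
  filter_upwards [hX.2, hU.le_cofinite (eventually_nuX_eq_of_finite_symmDiff hXY)] with n hn heq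
  rwa [← heq]

lemma exists_iUnion_Ico_mem_gapFamily (hh : Monotone h) {a : ℕ → ℕ} (ha0 : a 0 = 0)
    (ha : StrictMono a) :
    ∃ K : Set ℕ, K.Infinite ∧ (⋃ i ∈ K, Ico (a i) (a (i + 1))) ∈ gapFamily U h := by
  obtain ⟨k, hk, hk0, hhk⟩ := exists_strictMono_forall_lt_succ (h ∘ a)
  have hb : StrictMono (a ∘ k) := ha.comp hk
  have hhb : ∀ i, h (a (k i)) < a (k (i + 1)) := fun i => (hhk i).trans_le ha.le_apply
  obtain ⟨s, -, hsU⟩ := exists_blocksMod3_mem hb U (by simp [hk0, ha0])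
  have ht : (s + 2) % 3 < 3 := Nat.mod_lt _ (by norm_num)
  set K := blocksMod3 k ((s + 2) % 3)
  set Y := ⋃ i ∈ K, Ico (a i) (a (i + 1))
  have hYb : Y ⊆ blocksMod3 (a ∘ k) ((s + 2) % 3) := by
    simp only [Y, iUnion_subset_iff]
    rintro i ⟨j, hj, hki, hik⟩ m ⟨hm, hm'⟩
    exact ⟨j, hj, (ha.monotone hki).trans hm, hm'.trans_le (ha.monotone hik)⟩
  have hY : Y.Infinite := ((blocksMod3_infinite hk ht).image ha.injective.injOn).mono <| by
    rintro _ ⟨i, hi, rfl⟩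
    exact mem_biUnion hi (left_mem_Ico.2 (ha (lt_add_one i)))
  refine ⟨K, blocksMod3_infinite hk ht, hY, ?_⟩
  filter_upwards [hsU] with n hn
  exact lt_nuX_of_forall_lt hY fun m hm hnm => lt_of_mem_blocksMod3 hb hh hhb hn (hYb hm) hnm

lemma groupwiseDense_gapFamily (hU : Nonprincipal U) (hh : Monotone h) :
    GroupwiseDense (gapFamily U h) :=
  ⟨fun _ hX => hX.1, fun _ hX _ hYX hY => mem_gapFamily_of_subset hX hYX hY,
    fun _ hX _ hXY => mem_gapFamily_of_finite_symmDiff hU hX hXY,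
    fun _ ha0 ha => exists_iUnion_Ico_mem_gapFamily hh ha0 ha⟩

lemma sInter_gapFamily_eq_empty_of_uCofinal {C : Set (ℕ → ℕ)} (hC : UCofinal U C) :
    ⋂₀ ((fun g => gapFamily U (partialSups g)) '' C) = ∅ := by
  refine eq_empty_of_forall_notMem fun X hX => ?_
  obtain ⟨g, hgC, hg⟩ := hC (nuX X)
  obtain ⟨n, hgap, hdom⟩ := ((mem_sInter.1 hX _ (mem_image_of_mem _ hgC)).2.and hg).exists
  exact (hdom.trans (le_partialSups g n)).not_gt hgap

lemma groupwiseDensityNumber_le_mk_of_uCofinal (hU : Nonprincipal U) {C : Set (ℕ → ℕ)}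
    (hC : UCofinal U C) : groupwiseDensityNumber ≤ #C := by
  refine le_trans (csInf_le' ?_) (mk_image_le (f := fun g => gapFamily U (partialSups g)))
  refine ⟨_, ?_, sInter_gapFamily_eq_empty_of_uCofinal hC, rfl⟩
  rintro _ ⟨g, -, rfl⟩
  exact groupwiseDense_gapFamily hU (partialSups g).monotone

end gapFamily

/-- For every nonprincipal ultrafilter U on ℕ, cf(U-prod ω) ≥ 𝔤; that is,
every set of functions cofinal with respect to ≤_U has cardinality at least 𝔤. -/
theorem stmt_0 (U : Ultrafilter ℕ) (hU : Nonprincipal U) :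
    groupwiseDensityNumber ≤ cfUProd U ∧
      ∀ C : Set (ℕ → ℕ), UCofinal U C → groupwiseDensityNumber ≤ #C := by
  have hmk : ∀ C : Set (ℕ → ℕ), UCofinal U C → groupwiseDensityNumber ≤ #C :=
    fun _ => groupwiseDensityNumber_le_mk_of_uCofinal hU
  have huniv : UCofinal U univ := fun f => ⟨f, mem_univ f, univ_mem' fun n => le_refl (f n)⟩
  exact ⟨le_csInf ⟨_, univ, huniv, rfl⟩ fun _ ⟨C, hC, hc⟩ => hc ▸ hmk C hC, hmk⟩
end

section
/- The groupwise density number 𝔤 is at most the cofinality of the dominating number 𝔡, i.e., 𝔤 ≤ cf(𝔡). -/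
open Cardinal Set Filter

namespace StmtAux

lemma dom_set_nonempty : {c : Cardinal | ∃ D : Set (ℕ → ℕ),
    (∀ f : ℕ → ℕ, ∃ g ∈ D, {n : ℕ | ¬ f n ≤ g n}.Finite) ∧ c = #D}.Nonempty :=
  ⟨#(Set.univ : Set (ℕ → ℕ)), Set.univ, fun f => ⟨f, trivial, by simp⟩, rfl⟩

lemma dominating_card_le {D : Set (ℕ → ℕ)}
    (hD : ∀ f : ℕ → ℕ, ∃ g ∈ D, {n : ℕ | ¬ f n ≤ g n}.Finite) :
    dominatingNumber ≤ #D := csInf_le' ⟨D, hD, rfl⟩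

lemma aleph0_le_dom : ℵ₀ ≤ dominatingNumber := by
  refine le_csInf dom_set_nonempty ?_
  rintro c ⟨D, hD, rfl⟩
  by_contra h
  push_neg at h
  have hfin : D.Finite := Cardinal.lt_aleph0_iff_set_finite.mp h
  obtain ⟨g, hg, hfin'⟩ := hD (fun n => (hfin.toFinset.sup fun g => g n) + 1)
  have he : {n : ℕ | ¬ (hfin.toFinset.sup fun g => g n) + 1 ≤ g n} = Set.univ := by
    ext n
    simp only [Set.mem_setOf_eq, Set.mem_univ, iff_true]
    have : g n ≤ hfin.toFinset.sup (fun u => u n) :=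
      Finset.le_sup (f := fun u => u n) (hfin.mem_toFinset.mpr hg)
    exact fun hle => Nat.not_succ_le_self _ (hle.trans this)
  rw [he] at hfin'
  exact Set.infinite_univ hfin'

lemma escape {B : Set (ℕ → ℕ)} (hB : #B < dominatingNumber) :
    ∃ e : ℕ → ℕ, ∀ g ∈ B, {n : ℕ | g n < e n}.Infinite := by
  by_contra h
  push_neg at h
  have hdom : ∀ f : ℕ → ℕ, ∃ g ∈ B, {n : ℕ | ¬ f n ≤ g n}.Finite := by
    intro f
    obtain ⟨g, hg, hfin⟩ := h f
    exact ⟨g, hg, by simpa only [not_le] using hfin⟩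
  exact absurd (dominating_card_le hdom) (not_le.mpr hB)

/-- index of the first block past `k+1` and past all values `f n`, `n ≤ a (k+1)`. -/
noncomputable def hIdx (a f : ℕ → ℕ) (k : ℕ) : ℕ :=
  sInf {i : ℕ | max (a (k+1)) ((Finset.range (a (k+1) + 1)).sup f) < a i}

lemma hIdx_spec {a : ℕ → ℕ} (ha : StrictMono a) (f : ℕ → ℕ) (k : ℕ) :
    max (a (k+1)) ((Finset.range (a (k+1) + 1)).sup f) < a (hIdx a f k) := by
  have : hIdx a f k ∈ {i : ℕ | max (a (k+1)) ((Finset.range (a (k+1) + 1)).sup f) < a i} := by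
    apply Nat.sInf_mem
    refine ⟨max (a (k+1)) ((Finset.range (a (k+1) + 1)).sup f) + 1, ?_⟩
    exact lt_of_lt_of_le (Nat.lt_succ_self _) ha.le_apply
  exact this

lemma hIdx_mono {a : ℕ → ℕ} (ha : StrictMono a) (f : ℕ → ℕ) :
    Monotone (hIdx a f) := by
  intro k k' hkk'
  apply Nat.sInf_le
  have h1 : a (k+1) ≤ a (k'+1) := ha.monotone (by omega)
  have h2 : (Finset.range (a (k+1) + 1)).sup f ≤ (Finset.range (a (k'+1) + 1)).sup f :=
    Finset.sup_mono (Finset.range_subset_range.mpr (by omega))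
  have := hIdx_spec ha f k'
  exact lt_of_le_of_lt (max_le_max h1 h2) this

lemma hIdx_gt {a : ℕ → ℕ} (ha : StrictMono a) (f : ℕ → ℕ) (k : ℕ) :
    k + 1 < hIdx a f k := by
  have h := hIdx_spec ha f k
  have : a (k+1) < a (hIdx a f k) := lt_of_le_of_lt (le_max_left _ _) h
  exact ha.lt_iff_lt.mp this

lemma hIdx_bound {a : ℕ → ℕ} (ha : StrictMono a) (f : ℕ → ℕ) {k n : ℕ}
    (hn : n ≤ a (k+1)) : f n < a (hIdx a f k) := by
  have h := hIdx_spec ha f k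
  have h1 : f n ≤ (Finset.range (a (k+1) + 1)).sup f :=
    Finset.le_sup (Finset.mem_range.mpr (by omega))
  exact lt_of_le_of_lt (h1.trans (le_max_right _ _)) h

/-- The family of infinite sets having, for each `f ∈ F`, infinitely many `f`-gaps. -/
def gapFam (F : Set (ℕ → ℕ)) : Set (Set ℕ) :=
  {A : Set ℕ | A.Infinite ∧ ∀ f ∈ F, {n : ℕ | A ∩ Set.Ico n (f n) = ∅}.Infinite}

lemma gapFam_gwd {F : Set (ℕ → ℕ)} (hF : #F < dominatingNumber) :
    GroupwiseDense (gapFam F) := by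
  refine ⟨fun X hX => hX.1, ?_, ?_, ?_⟩
  · rintro X ⟨-, hgap⟩ Y hYX hYinf
    refine ⟨hYinf, fun f hf => (hgap f hf).mono ?_⟩
    intro n hn
    simp only [Set.mem_setOf_eq] at hn ⊢
    exact Set.eq_empty_of_subset_empty (hn ▸ Set.inter_subset_inter_left _ hYX)
  · rintro X ⟨hXinf, hgap⟩ Y hsd
    have hYX : (Y \ X).Finite := hsd.subset fun x hx =>
      Set.mem_symmDiff.mpr (Or.inr ⟨hx.1, hx.2⟩)
    have hXY : (X \ Y).Finite := hsd.subset fun x hx =>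
      Set.mem_symmDiff.mpr (Or.inl ⟨hx.1, hx.2⟩)
    have hYinf : Y.Infinite := by
      have h1 : (X \ (X \ Y)).Infinite := hXinf.diff hXY
      refine Set.Infinite.mono ?_ h1
      intro x hx
      by_contra hxy
      exact hx.2 ⟨hx.1, hxy⟩
    refine ⟨hYinf, fun f hf => ?_⟩
    obtain ⟨N, hN⟩ := hYX.bddAbove
    have h2 : ({n : ℕ | X ∩ Set.Ico n (f n) = ∅} \ Set.Iio (N+1)).Infinite :=
      (hgap f hf).diff (Set.finite_Iio (N+1))
    refine Set.Infinite.mono ?_ h2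
    rintro n ⟨hn1, hn2⟩
    simp only [Set.mem_setOf_eq] at hn1 ⊢
    apply Set.eq_empty_iff_forall_notMem.mpr
    rintro x ⟨hxY, hxm⟩
    obtain ⟨hxn, hxf⟩ := Set.mem_Ico.mp hxm
    by_cases hxX : x ∈ X
    · exact Set.eq_empty_iff_forall_notMem.mp hn1 x ⟨hxX, Set.mem_Ico.mpr ⟨hxn, hxf⟩⟩
    · have hb : x ≤ N := hN ⟨hxY, hxX⟩
      simp only [Set.mem_Iio, not_lt] at hn2
      omega
  · intro a ha0 ha
    have hH : #((fun f => fun k => hIdx a f (hIdx a f k)) '' F) < dominatingNumber :=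
      lt_of_le_of_lt Cardinal.mk_image_le hF
    obtain ⟨e₀, he₀⟩ := escape hH
    set e : ℕ → ℕ := fun k => ((Finset.range (k+1)).sup e₀) + k + 1 with he_def
    have he₀e : ∀ k, e₀ k < e k := by
      intro k
      have h1 : e₀ k ≤ (Finset.range (k+1)).sup e₀ :=
        Finset.le_sup (Finset.mem_range.mpr (Nat.lt_succ_self k))
      simp only [he_def]
      omega
    have hsupmono : Monotone fun k => (Finset.range (k+1)).sup e₀ := by
      intro i j hij
      exact Finset.sup_mono (Finset.range_subset_range.mpr (by omega))
    have hemono : StrictMono e := by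
      intro i j hij
      have h := hsupmono hij.le
      simp only at h
      simp only [he_def]
      omega
    set ks : ℕ → ℕ := fun j => e^[j] 0 with hks_def
    have hks_succ : ∀ j, ks (j+1) = e (ks j) := fun j => Function.iterate_succ_apply' e j 0
    have hks0 : ks 0 = 0 := by simp [hks_def]
    have hks_lt : ∀ j, ks j < ks (j+1) := by
      intro j
      rw [hks_succ j]
      simp only [he_def]
      omega
    have hksmono : StrictMono ks := strictMono_nat_of_lt_succ hks_lt
    refine ⟨Set.range ks, Set.infinite_range_of_injective hksmono.injective, ?_, ?_⟩
    · -- infinite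
      have hinj : Function.Injective fun j => a (ks j) := (ha.comp hksmono).injective
      refine Set.Infinite.mono ?_ (Set.infinite_range_of_injective hinj)
      rintro x ⟨j, rfl⟩
      exact Set.mem_biUnion ⟨j, rfl⟩ (Set.mem_Ico.mpr ⟨le_refl _, ha (Nat.lt_succ_self _)⟩)
    · intro f hf
      have hW : {k : ℕ | hIdx a f (hIdx a f k) < e₀ k}.Infinite := he₀ _ ⟨f, hf, rfl⟩
      apply Set.infinite_of_forall_exists_gt
      intro N
      obtain ⟨k, hkW, hkN⟩ := hW.exists_gt (e N)
      simp only [Set.mem_setOf_eq] at hkW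
      set j : ℕ := Nat.findGreatest (fun j' => ks j' ≤ k) k with hj_def
      have hks_le : ks j ≤ k := by
        rw [hj_def]
        exact Nat.findGreatest_spec (P := fun j' => ks j' ≤ k) (m := 0) (n := k) (Nat.zero_le k) (show ks 0 ≤ k by omega)
      have hk_lt : k < ks (j+1) := by
        by_cases hcase : j + 1 ≤ k
        · have hng := Nat.findGreatest_is_greatest (P := fun j' => ks j' ≤ k) (n := k)
            (by rw [← hj_def]; exact Nat.lt_succ_self j) hcase
          omega
        · have h1 : j ≤ ks j := hksmono.le_apply
          have h2 := hks_lt j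
          omega
      have hNj : N < ks j := by
        have h1 : e N < e (ks j) := by
          rw [← hks_succ j]
          omega
        exact hemono.lt_iff_lt.mp h1
      have hmono := hIdx_mono ha f
      have hm1 : hIdx a f (ks j) ≤ hIdx a f k := hmono hks_le
      have hm2 : hIdx a f (hIdx a f (ks j)) ≤ hIdx a f (hIdx a f k) := hmono hm1
      have hlt2 : hIdx a f (hIdx a f k) < ks (j+2) := by
        have h1 : e k < e (ks (j+1)) := hemono hk_lt
        have h2 : ks (j+2) = e (ks (j+1)) := hks_succ (j+1)
        have h3 := he₀e k
        omega
      have hgt := hIdx_gt ha f (hIdx a f k)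
      by_cases hcase : hIdx a f (ks j) ≤ ks (j+1)
      · refine ⟨a (ks j + 1), ?_, ?_⟩
        · simp only [Set.mem_setOf_eq]
          apply Set.eq_empty_iff_forall_notMem.mpr
          rintro x ⟨hxA, hxm⟩
          obtain ⟨hxn, hxf⟩ := Set.mem_Ico.mp hxm
          rw [Set.mem_iUnion₂] at hxA
          obtain ⟨kk, hkk, hxI⟩ := hxA
          obtain ⟨i, rfl⟩ := hkk
          obtain ⟨hx1, hx2⟩ := Set.mem_Ico.mp hxI
          have hi : j < i := by
            by_contra hle
            push_neg at hle
            have h3 : ks i + 1 ≤ ks j + 1 := by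
              have := hksmono.monotone hle
              omega
            have h4 : a (ks i + 1) ≤ a (ks j + 1) := ha.monotone h3
            omega
          have h5 : ks (j+1) ≤ ks i := hksmono.monotone hi
          have h6 : a (hIdx a f (ks j)) ≤ a (ks i) := ha.monotone (hcase.trans h5)
          have h7 : f (a (ks j + 1)) < a (hIdx a f (ks j)) := hIdx_bound ha f (le_refl _)
          omega
        · have h8 : ks j + 1 ≤ a (ks j + 1) := ha.le_apply
          omega
      · push_neg at hcase
        refine ⟨a (ks (j+1) + 1), ?_, ?_⟩
        · simp only [Set.mem_setOf_eq]
          apply Set.eq_empty_iff_forall_notMem.mpr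
          rintro x ⟨hxA, hxm⟩
          obtain ⟨hxn, hxf⟩ := Set.mem_Ico.mp hxm
          rw [Set.mem_iUnion₂] at hxA
          obtain ⟨kk, hkk, hxI⟩ := hxA
          obtain ⟨i, rfl⟩ := hkk
          obtain ⟨hx1, hx2⟩ := Set.mem_Ico.mp hxI
          have hi : j + 1 < i := by
            by_contra hle
            push_neg at hle
            have h3 : a (ks i + 1) ≤ a (ks (j+1) + 1) := by
              apply ha.monotone
              have := hksmono.monotone hle
              omega
            omega
          have h5 : ks (j+2) ≤ ks i := hksmono.monotone hi
          have h6 : a (ks (j+2)) ≤ a (ks i) := ha.monotone h5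
          have h7 : f (a (ks (j+1) + 1)) < a (hIdx a f (hIdx a f (ks j))) :=
            hIdx_bound ha f (ha.monotone (by omega))
          have h8 : a (hIdx a f (hIdx a f (ks j))) ≤ a (ks (j+2)) := by
            apply ha.monotone
            omega
          omega
        · have h8 : ks (j+1) + 1 ≤ a (ks (j+1) + 1) := ha.le_apply
          have h9 := hks_lt j
          omega

lemma key : groupwiseDensityNumber ≤ (Cardinal.ord dominatingNumber).cof := by
  obtain ⟨D, hD, hcard⟩ :
      ∃ D : Set (ℕ → ℕ), (∀ f : ℕ → ℕ, ∃ g ∈ D, {n : ℕ | ¬ f n ≤ g n}.Finite) ∧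
        dominatingNumber = #D := csInf_mem dom_set_nonempty
  set o := Cardinal.ord dominatingNumber with ho_def
  have hmk : #(↥D) = #o.ToType := by
    rw [Cardinal.mk_toType, ho_def, Cardinal.card_ord, hcard]
  obtain ⟨E⟩ : Nonempty (↥D ≃ o.ToType) := Cardinal.eq.mp hmk
  haveI hwo : IsWellOrder o.ToType (· < ·) := isWellOrder_lt
  obtain ⟨S, hSunb', hScard⟩ := Order.exists_cof_eq (α := o.ToType)
  rw [Ordinal.cof_toType] at hScard
  have hSunb : ∀ a, ∃ b ∈ S, ¬ b < a := fun a => (hSunb' a).imp fun b hb => ⟨hb.1, not_lt.mpr hb.2⟩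
  set Dset : o.ToType → Set (ℕ → ℕ) := fun s => {g | ∃ hg : g ∈ D, E ⟨g, hg⟩ ≤ s} with hDset
  have hDsetcard : ∀ s, #(Dset s) < dominatingNumber := by
    intro s
    have h1 : #(Dset s) ≤ #(Set.Iic s) := by
      apply Cardinal.mk_le_of_injective
        (f := fun x : ↥(Dset s) => (⟨E ⟨x.1, x.2.choose⟩, x.2.choose_spec⟩ : ↥(Set.Iic s)))
      intro x y hxy
      have h2 : E ⟨x.1, x.2.choose⟩ = E ⟨y.1, y.2.choose⟩ := congrArg Subtype.val hxy
      have h3 := E.injective h2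
      have h4 : (x.1 : ℕ → ℕ) = y.1 := congrArg (fun z : ↥D => z.val) h3
      exact Subtype.ext h4
    have hIio : #(Set.Iio s) < dominatingNumber := by
      have h4 := Cardinal.card_typein_toType_lt dominatingNumber s
      calc #(Set.Iio s) = (Ordinal.typein (α := o.ToType) (· < ·) s).card :=
            @Ordinal.card_typein o.ToType (· < ·) hwo s
        _ < dominatingNumber := h4
    have hIic : #(Set.Iic s) < dominatingNumber := by
      rw [← Set.Iio_insert]
      exact lt_of_le_of_lt Cardinal.mk_insert_le
        (Cardinal.add_lt_of_lt aleph0_le_dom hIio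
          (lt_of_lt_of_le Cardinal.one_lt_aleph0 aleph0_le_dom))
    exact lt_of_le_of_lt h1 hIic
  have hg_le : groupwiseDensityNumber ≤ #((fun s => gapFam (Dset s)) '' S) := by
    apply csInf_le'
    refine ⟨_, ?_, ?_, rfl⟩
    · rintro G ⟨s, hs, rfl⟩
      exact gapFam_gwd (hDsetcard s)
    · apply Set.eq_empty_iff_forall_notMem.mpr
      intro A hA
      have hne : Nonempty o.ToType := by
        rw [Ordinal.toType_nonempty_iff_ne_zero]
        intro h0
        have h1 : o.card = dominatingNumber := by rw [ho_def, Cardinal.card_ord]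
        rw [h0, Ordinal.card_zero] at h1
        have h5 := aleph0_le_dom
        rw [← h1] at h5
        exact Cardinal.aleph0_ne_zero (nonpos_iff_eq_zero.mp h5)
      obtain ⟨x₀⟩ := hne
      obtain ⟨s₀, hs₀, -⟩ := hSunb x₀
      have hAinf : A.Infinite :=
        (Set.mem_sInter.mp hA _ ⟨s₀, hs₀, rfl⟩).1
      obtain ⟨g, hgD, hgfin⟩ := hD (fun n => nuX A n + 1)
      obtain ⟨s, hsS, hxs⟩ := hSunb (E ⟨g, hgD⟩)
      have hxs' : E ⟨g, hgD⟩ ≤ s := not_lt.mp hxs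
      have hgap : {n : ℕ | A ∩ Set.Ico n (g n) = ∅}.Infinite :=
        (Set.mem_sInter.mp hA _ ⟨s, hsS, rfl⟩).2 g ⟨hgD, hxs'⟩
      obtain ⟨N, hN⟩ := hgfin.bddAbove
      obtain ⟨n, hngap, hnN⟩ := hgap.exists_gt N
      simp only [Set.mem_setOf_eq] at hngap
      have hphile : nuX A n + 1 ≤ g n := by
        by_contra hc
        have h6 : n ≤ N := hN (show n ∈ {n : ℕ | ¬ ((fun n => nuX A n + 1) n ≤ g n)} from hc)
        omega
      have hnu : nuX A n ∈ {m : ℕ | m ∈ A ∧ n < m} := by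
        apply Nat.sInf_mem
        obtain ⟨m, hm, hmn⟩ := hAinf.exists_gt n
        exact ⟨m, hm, hmn⟩
      exact Set.eq_empty_iff_forall_notMem.mp hngap (nuX A n)
        ⟨hnu.1, Set.mem_Ico.mpr ⟨le_of_lt hnu.2, by omega⟩⟩
  calc groupwiseDensityNumber ≤ _ := hg_le
    _ ≤ #S := Cardinal.mk_image_le
    _ = o.cof := hScard

end StmtAux

/-- 𝔤 ≤ cf(𝔡). -/
theorem stmt_1 : groupwiseDensityNumber ≤ (Cardinal.ord dominatingNumber).cof :=
  StmtAux.key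
end

section
/- If U is a nonprincipal ultrafilter on ℕ that is a pseudo-P_κ point for some cardinal κ > 𝔟, then the cofinality of the ultrapower U-prod ω equals the bounding number 𝔟. -/
open Cardinal Set Filter

/-!
A set cofinal for `≤_U` is unbounded, because the members of a nonprincipal `U` are infinite;
so `𝔟 ≤ cf(U-prod ω)`. Conversely, take an unbounded family `B` of size `𝔟` and replace each
`g ∈ B` by its running maximum `ĝ`. If some `f` were not `≤_U`-below any `ĝ`, the fewer than `κ`
sets `{n | ĝ n < f̂ n}` would lie in `U` and so have an infinite pseudo-intersection `A`. Then
`n ↦ f̂ (min (A ∩ (n, ∞)))` eventually dominates every `g ∈ B` (monotonicity of `ĝ` gives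
`g n ≤ ĝ n ≤ ĝ (min (A ∩ (n, ∞)))`), contradicting unboundedness.
-/

def UnboundedFamily (B : Set (ℕ → ℕ)) : Prop :=
  ∀ f : ℕ → ℕ, ∃ g ∈ B, {n : ℕ | f n ≤ g n}.Infinite

noncomputable def runningMax (f : ℕ → ℕ) (n : ℕ) : ℕ := (Finset.range (n + 1)).sup f

lemma le_runningMax (f : ℕ → ℕ) (n : ℕ) : f n ≤ runningMax f n :=
  Finset.le_sup (Finset.self_mem_range_succ n)

lemma runningMax_mono (f : ℕ → ℕ) : Monotone (runningMax f) := fun _ _ h =>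
  Finset.sup_mono (Finset.range_subset_range.2 (Nat.succ_le_succ h))

lemma nuX_mem_and_lt_s2 {A : Set ℕ} (hA : A.Infinite) (n : ℕ) : nuX A n ∈ A ∧ n < nuX A n :=
  Nat.sInf_mem (hA.exists_gt n)

lemma Nonprincipal.infinite_of_mem {U : Ultrafilter ℕ} (hU : Nonprincipal U) {S : Set ℕ}
    (hS : S ∈ U) : S.Infinite := fun hfin =>
  let ⟨a, _, ha⟩ := Ultrafilter.eq_pure_of_finite_mem hfin hS
  hU a ha

lemma univ_unboundedFamily : UnboundedFamily univ := fun f =>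
  ⟨f, trivial, by simpa using infinite_univ⟩

lemma exists_unboundedFamily_mk_eq_boundingNumber :
    ∃ B : Set (ℕ → ℕ), UnboundedFamily B ∧ boundingNumber = #B :=
  csInf_mem (s := {c | ∃ B, UnboundedFamily B ∧ c = #B}) ⟨_, univ, univ_unboundedFamily, rfl⟩

lemma cfUProd_le_mk {U : Ultrafilter ℕ} {C : Set (ℕ → ℕ)} (hC : UCofinal U C) :
    cfUProd U ≤ #C :=
  csInf_le' ⟨C, hC, rfl⟩

lemma Nonprincipal.unboundedFamily_of_uCofinal {U : Ultrafilter ℕ} (hU : Nonprincipal U)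
    {C : Set (ℕ → ℕ)} (hC : UCofinal U C) : UnboundedFamily C := fun f =>
  let ⟨g, hg, hfg⟩ := hC f
  ⟨g, hg, hU.infinite_of_mem hfg⟩

lemma boundingNumber_le_cfUProd {U : Ultrafilter ℕ} (hU : Nonprincipal U) :
    boundingNumber ≤ cfUProd U := by
  refine le_csInf ⟨_, univ, fun f => ⟨f, trivial, univ_mem' fun n => le_refl (f n)⟩, rfl⟩ ?_
  rintro c ⟨C, hC, rfl⟩
  exact csInf_le' ⟨C, hU.unboundedFamily_of_uCofinal hC, rfl⟩

lemma eventually_lt_runningMax_nuX {A : Set ℕ} (hA : A.Infinite) {f g : ℕ → ℕ}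
    (hfin : (A \ {m | runningMax g m < runningMax f m}).Finite) :
    ∀ᶠ n in atTop, g n < runningMax f (nuX A n) := by
  obtain ⟨N, hN⟩ := hfin.bddAbove
  filter_upwards [eventually_ge_atTop N] with n hn
  obtain ⟨hmem, hlt⟩ := nuX_mem_and_lt_s2 hA n
  have hgf : runningMax g (nuX A n) < runningMax f (nuX A n) := by
    by_contra hge
    have : nuX A n ≤ N := hN ⟨hmem, hge⟩
    omega
  calc g n ≤ runningMax g n := le_runningMax g n
    _ ≤ runningMax g (nuX A n) := runningMax_mono g hlt.le
    _ < runningMax f (nuX A n) := hgf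

lemma PseudoPPoint.uCofinal_image_runningMax {U : Ultrafilter ℕ} {κ : Cardinal}
    (hP : PseudoPPoint U κ) {B : Set (ℕ → ℕ)} (hB : UnboundedFamily B) (hBκ : #B < κ) :
    UCofinal U (runningMax '' B) := by
  intro f
  by_contra! hnot
  set F : Set (Set ℕ) := (fun g => {m | runningMax g m < runningMax f m}) '' B
  have hFU : ∀ X ∈ F, X ∈ U := by
    rintro _ ⟨g, hg, rfl⟩
    have hle : {m | runningMax f m ≤ runningMax g m} ∉ U := fun hmem =>
      hnot _ ⟨g, hg, rfl⟩ (mem_of_superset hmem fun m hm => (le_runningMax f m).trans hm)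
    simpa only [compl_ofPred, not_le] using Ultrafilter.compl_mem_iff_notMem.2 hle
  obtain ⟨A, hA, hAF⟩ := hP F hFU (mk_image_le.trans_lt hBκ)
  obtain ⟨g, hg, hinf⟩ := hB fun n => runningMax f (nuX A n)
  have hfreq : ∃ᶠ n in atTop, runningMax f (nuX A n) ≤ g n := by
    rwa [← Nat.cofinite_eq_atTop, frequently_cofinite_iff_infinite]
  obtain ⟨n, hle, hlt⟩ :=
    (hfreq.and_eventually (eventually_lt_runningMax_nuX hA (hAF _ ⟨g, hg, rfl⟩))).exists
  omega

/-- If U is a pseudo-P_κ point for some κ > 𝔟, then cf(U-prod ω) = 𝔟. -/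
theorem stmt_2 (U : Ultrafilter ℕ) (hU : Nonprincipal U) (κ : Cardinal)
    (hκ : boundingNumber < κ) (hP : PseudoPPoint U κ) :
    cfUProd U = boundingNumber := by
  obtain ⟨B, hB, hBcard⟩ := exists_unboundedFamily_mk_eq_boundingNumber
  refine le_antisymm ?_ (boundingNumber_le_cfUProd hU)
  calc cfUProd U ≤ #(runningMax '' B) :=
        cfUProd_le_mk (hP.uCofinal_image_runningMax hB (hBcard ▸ hκ))
    _ ≤ #B := mk_image_le
    _ = boundingNumber := hBcard.symm
end

section
/- If a nonprincipal ultrafilter U on ℕ is a pseudo-P_κ point, then the splitting number 𝔰 is at least κ. -/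
open Cardinal Set Filter

/-!
Let `S` split every infinite set and suppose `#S < κ`. From each `Y ∈ S` pick whichever of `Y`,
`Yᶜ` lies in `U`; these fewer than `κ` sets have an infinite pseudo-intersection `A`, which is
then almost contained in `Y` or in `Yᶜ` for every `Y ∈ S`, so no member of `S` splits `A`.
-/

theorem Set.Infinite.exists_split {α : Type*} {X : Set α} (hX : X.Infinite) :
    ∃ Y : Set α, (X ∩ Y).Infinite ∧ (X \ Y).Infinite := by
  let f : ℕ → α := fun n => hX.natEmbedding _ n
  have hf : Function.Injective f := Subtype.val_injective.comp (hX.natEmbedding _).injective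
  have hfX : ∀ s, f '' s ⊆ X := fun s => image_subset_iff.2 fun n _ => (hX.natEmbedding _ n).2
  have hEven : {n : ℕ | Even n}.Infinite :=
    infinite_of_forall_exists_gt fun a => ⟨2 * a + 2, ⟨a + 1, by ring⟩, by omega⟩
  have hOdd : {n : ℕ | Even n}ᶜ.Infinite :=
    infinite_of_forall_exists_gt fun a => ⟨2 * a + 1, by simp, by omega⟩
  refine ⟨f '' {n | Even n}, ?_, ?_⟩
  · exact (hEven.image hf.injOn).mono (subset_inter (hfX _) subset_rfl)
  · exact (hOdd.image hf.injOn).mono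
      (subset_sdiff.2 ⟨hfX _, subset_compl_iff_disjoint_right.1 (image_compl_subset hf)⟩)

namespace Ultrafilter

variable {α : Type*} (U : Ultrafilter α)

open Classical in
noncomputable def side (Y : Set α) : Set α := if Y ∈ U then Y else Yᶜ

theorem side_mem (Y : Set α) : U.side Y ∈ U := by
  unfold side
  split_ifs with hY
  · exact hY
  · exact compl_mem_iff_notMem.2 hY

theorem not_split_of_diff_side_finite {A Y : Set α} (h : (A \ U.side Y).Finite) :
    ¬((A ∩ Y).Infinite ∧ (A \ Y).Infinite) := by
  unfold side at h
  split_ifs at h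
  · exact fun hsplit => hsplit.2 h
  · exact fun hsplit => hsplit.1 (sdiff_compl ▸ h)

end Ultrafilter

theorem stmt_3_general (U : Ultrafilter ℕ) (κ : Cardinal)
    (hP : PseudoPPoint U κ) :
    κ ≤ splittingNumber := by
  -- `le_csInf` needs a splitting family to exist, else `sInf ∅ = 0`; `univ` is one.
  refine le_csInf ⟨_, univ, fun X hX => ?_, rfl⟩ ?_
  · obtain ⟨Y, hY⟩ := hX.exists_split
    exact ⟨Y, trivial, hY⟩
  rintro _ ⟨S, hS, rfl⟩
  by_contra! hlt
  obtain ⟨A, hA, hAS⟩ := hP (U.side '' S) (forall_mem_image.2 fun Y _ => U.side_mem Y)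
    (mk_image_le.trans_lt hlt)
  obtain ⟨Y, hYS, hsplit⟩ := hS A hA
  exact U.not_split_of_diff_side_finite (hAS _ (mem_image_of_mem _ hYS)) hsplit

/-- If U is a pseudo-P_κ point, then 𝔰 ≥ κ. -/
theorem stmt_3 (U : Ultrafilter ℕ) (hU : Nonprincipal U) (κ : Cardinal)
    (hP : PseudoPPoint U κ) :
    κ ≤ splittingNumber :=
  stmt_3_general U κ hP
end

section
/- Suppose U and U' are nonprincipal ultrafilters on ℕ such that both cf(U-prod ω) and cf(U'-prod ω) are smaller than the splitting number 𝔰. Then U and U' are nearly coherent. -/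
open Cardinal Set Filter

/-! ### Auxiliary machinery for the proof of `stmt_4` -/

section NCAux

/-- A strictly increasing majorant of `g`. -/
private def msum (g : ℕ → ℕ) : ℕ → ℕ := fun n => n + 1 + (Finset.range (n + 1)).sum g

private theorem msum_strictMono (g : ℕ → ℕ) : StrictMono (msum g) := by
  apply strictMono_nat_of_lt_succ
  intro n
  have h : (Finset.range (n + 1)).sum g ≤ (Finset.range (n + 1 + 1)).sum g :=
    Finset.sum_le_sum_of_subset (Finset.range_subset_range.mpr (Nat.le_succ _))
  simp only [msum]
  omega

private theorem le_msum (g : ℕ → ℕ) (n : ℕ) : g n ≤ msum g n := by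
  have h : g n ≤ (Finset.range (n + 1)).sum g :=
    Finset.single_le_sum (fun i _ => Nat.zero_le (g i)) (Finset.self_mem_range_succ n)
  simp only [msum]
  omega

private theorem lt_msum (g : ℕ → ℕ) (n : ℕ) : n < msum g n := by
  simp only [msum]; omega

/-- The joint strictly increasing majorant of `g` and `g'`. -/
private def bG (g g' : ℕ → ℕ) : ℕ → ℕ := fun n => max (msum g n) (msum g' n)

private theorem bG_strictMono (g g' : ℕ → ℕ) : StrictMono (bG g g') :=
  fun _ _ h => max_lt_max (msum_strictMono g h) (msum_strictMono g' h)

private theorem lt_bG (g g' : ℕ → ℕ) (n : ℕ) : n < bG g g' n :=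
  lt_of_lt_of_le (lt_msum g n) (le_max_left _ _)

/-- Iteration sequence of a function `G`, starting at 0. -/
private def beta (G : ℕ → ℕ) : ℕ → ℕ
  | 0 => 0
  | j + 1 => G (beta G j)

private theorem beta_strictMono {G : ℕ → ℕ} (hG2 : ∀ n, n < G n) : StrictMono (beta G) :=
  strictMono_nat_of_lt_succ fun j => hG2 (beta G j)

/-- Index of the `beta G`-block containing `n`. -/
private def idx (G : ℕ → ℕ) (n : ℕ) : ℕ := Nat.findGreatest (fun j => beta G j ≤ n) n

private theorem beta_idx_le (G : ℕ → ℕ) (n : ℕ) : beta G (idx G n) ≤ n :=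
  Nat.findGreatest_spec (P := fun j => beta G j ≤ n) (Nat.zero_le n)
    (show beta G 0 ≤ n from le_of_eq_of_le rfl (Nat.zero_le n))

private theorem lt_beta_idx {G : ℕ → ℕ} (hG2 : ∀ n, n < G n) (n : ℕ) :
    n < beta G (idx G n + 1) := by
  by_cases h : idx G n + 1 ≤ n
  · by_contra hle
    push_neg at hle
    exact Nat.findGreatest_is_greatest (Nat.lt_succ_self _) h hle
  · push_neg at h
    have h2 : idx G n + 1 ≤ beta G (idx G n + 1) := (beta_strictMono hG2).le_apply
    omega

private theorem idx_mono {G : ℕ → ℕ} (hG2 : ∀ n, n < G n) {n y : ℕ} (h : n < y) :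
    idx G n ≤ idx G y := by
  by_contra hlt
  push_neg at hlt
  have h1 : beta G (idx G y + 1) ≤ beta G (idx G n) :=
    (beta_strictMono hG2).monotone (by omega)
  have h2 := lt_beta_idx hG2 y
  have h3 := beta_idx_le G n
  omega

private theorem idx_le_succ {G : ℕ → ℕ} (hG1 : StrictMono G) (hG2 : ∀ n, n < G n)
    {n y : ℕ} (h : y ≤ G n) : idx G y ≤ idx G n + 1 := by
  have h1 : y < beta G (idx G n + 1 + 1) := by
    have h0 := lt_beta_idx hG2 n
    have hlt : G n < G (beta G (idx G n + 1)) := hG1 h0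
    have he : beta G (idx G n + 1 + 1) = G (beta G (idx G n + 1)) := rfl
    omega
  by_contra hlt
  push_neg at hlt
  have h2 : beta G (idx G n + 1 + 1) ≤ beta G (idx G y) :=
    (beta_strictMono hG2).monotone (by omega)
  have h3 := beta_idx_le G y
  omega

/-- Canonical choice of a "bad" set witnessing `map q U ≠ map q U'`. -/
private noncomputable def Wc (U U' : Ultrafilter ℕ) (q : ℕ → ℕ) : Set ℕ :=
  letI := Classical.propDecidable (∃ W : Set ℕ, q ⁻¹' W ∈ U ∧ (q ⁻¹' W)ᶜ ∈ U')
  if h : ∃ W : Set ℕ, q ⁻¹' W ∈ U ∧ (q ⁻¹' W)ᶜ ∈ U' then h.choose else ∅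

private theorem Wc_spec {U U' : Ultrafilter ℕ} {q : ℕ → ℕ}
    (h : ∃ W : Set ℕ, q ⁻¹' W ∈ U ∧ (q ⁻¹' W)ᶜ ∈ U') :
    q ⁻¹' (Wc U U' q) ∈ U ∧ (q ⁻¹' (Wc U U' q))ᶜ ∈ U' := by
  unfold Wc
  rw [dif_pos h]
  exact h.choose_spec

/-- First pairing map: blocks `{2k, 2k+1}` are merged. -/
private def p0 (G : ℕ → ℕ) : ℕ → ℕ := fun n => idx G n / 2

/-- Second pairing map: blocks `{2k-1, 2k}` are merged. -/
private def p1 (G : ℕ → ℕ) : ℕ → ℕ := fun n => (idx G n + 1) / 2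

/-- The three sets, associated to a pair `(g, g')`, of which the splitting
family is composed. -/
private noncomputable def bSet (U U' : Ultrafilter ℕ) (g g' : ℕ → ℕ) : ℕ → Set ℕ :=
  fun i =>
    if i = 0 then {n : ℕ | idx (bG g g') n % 2 = 0}
    else if i = 1 then (p0 (bG g g')) ⁻¹' (Wc U U' (p0 (bG g g')))
    else (p1 (bG g g')) ⁻¹' (Wc U U' (p1 (bG g g')))

end NCAux

/-- If both cf(U-prod ω) and cf(U'-prod ω) are smaller than 𝔰, then U and U'
are nearly coherent. -/
theorem stmt_4 (U U' : Ultrafilter ℕ) (hU : Nonprincipal U) (hU' : Nonprincipal U')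
    (h1 : cfUProd U < splittingNumber) (h2 : cfUProd U' < splittingNumber) :
    NearlyCoherent U U' := by
  classical
  by_contra hNC
  -- every member of a nonprincipal ultrafilter is infinite
  have memInf : ∀ (V : Ultrafilter ℕ), Nonprincipal V → ∀ S : Set ℕ, S ∈ V → S.Infinite := by
    intro V hV S hS
    by_contra h
    rw [Set.not_infinite] at h
    obtain ⟨a, -, ha⟩ := Ultrafilter.eq_pure_of_finite_mem h hS
    exact hV a ha
  have pick : ∀ (V : Ultrafilter ℕ), Nonprincipal V → ∀ S : Set ℕ, S ∈ V → ∀ N : ℕ,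
      ∃ n ∈ S, N ≤ n := by
    intro V hV S hS N
    by_contra h
    push_neg at h
    exact memInf V hV S hS (Set.Finite.subset (Set.finite_Iio N) fun n hn => h n hn)
  -- extract cofinal families of size < 𝔰
  have getC : ∀ V : Ultrafilter ℕ, cfUProd V < splittingNumber →
      ∃ C : Set (ℕ → ℕ), UCofinal V C ∧ #C < splittingNumber ∧ C.Infinite := by
    intro V hV
    have hne : {c : Cardinal | ∃ C : Set (ℕ → ℕ), UCofinal V C ∧ c = #C}.Nonempty := by
      refine ⟨#(Set.univ : Set (ℕ → ℕ)), Set.univ, ?_, rfl⟩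
      intro f
      refine ⟨f, Set.mem_univ f, ?_⟩
      have he : {n : ℕ | f n ≤ f n} = Set.univ := by ext n; simp
      rw [he]
      exact Filter.univ_mem
    obtain ⟨C, hC, hCe⟩ := csInf_mem hne
    have hlt : #C < splittingNumber := by
      have : cfUProd V = #C := hCe
      rw [← this]; exact hV
    refine ⟨C, hC, hlt, ?_⟩
    by_contra hfin
    rw [Set.not_infinite] at hfin
    obtain ⟨g, hg, hmem⟩ := hC (fun n => (hfin.toFinset.sup fun h => h n) + 1)
    have he : {n : ℕ | (hfin.toFinset.sup fun h => h n) + 1 ≤ g n} = (∅ : Set ℕ) := by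
      ext n
      simp only [Set.mem_setOf_eq, Set.mem_empty_iff_false, iff_false, not_le]
      have hle : g n ≤ hfin.toFinset.sup fun h => h n :=
        Finset.le_sup (f := fun h => h n) (hfin.mem_toFinset.mpr hg)
      exact Nat.lt_succ_of_le hle
    rw [he] at hmem
    exact Ultrafilter.empty_notMem hmem
  obtain ⟨C, hC, hCs, hCinf⟩ := getC U h1
  obtain ⟨C', hC', hC's, hC'inf⟩ := getC U' h2
  have hCale : ℵ₀ ≤ #C := by
    haveI := hCinf.to_subtype
    exact Cardinal.aleph0_le_mk _
  have hs0 : ℵ₀ ≤ splittingNumber := le_of_lt (lt_of_le_of_lt hCale hCs)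
  -- the splitting family
  set F : (↥C × ↥C' × Fin 3) → Set ℕ :=
    fun x => bSet U U' x.1.1 x.2.1.1 x.2.2.1 with hFdef
  have hcard : #(Set.range F) < splittingNumber := by
    refine lt_of_le_of_lt Cardinal.mk_range_le ?_
    have e1 : #(↥C × ↥C' × Fin 3) = #C * (#C' * 3) := by
      rw [Cardinal.mk_prod, Cardinal.mk_prod, Cardinal.mk_fin]
      simp
    rw [e1]
    have h3 : (3 : Cardinal) < splittingNumber :=
      lt_of_lt_of_le (Cardinal.nat_lt_aleph0 3) hs0
    exact Cardinal.mul_lt_of_lt hs0 hCs (Cardinal.mul_lt_of_lt hs0 hC's h3)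
  -- the family of size < 𝔰 is not splitting: get an unsplit infinite Y
  have hnotsplit : ¬ ∀ X : Set ℕ, X.Infinite →
      ∃ T ∈ Set.range F, (X ∩ T).Infinite ∧ (X \ T).Infinite := by
    intro hsp
    have hmem : splittingNumber ≤ #(Set.range F) :=
      csInf_le (OrderBot.bddBelow _) ⟨Set.range F, hsp, rfl⟩
    exact absurd hcard (not_lt.mpr hmem)
  push_neg at hnotsplit
  obtain ⟨Y, hYinf, hYuns⟩ := hnotsplit
  -- basic facts about nuX Y
  have nu_spec : ∀ n : ℕ, nuX Y n ∈ Y ∧ n < nuX Y n := by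
    intro n
    have hne : {m : ℕ | m ∈ Y ∧ n < m}.Nonempty := by
      by_contra h
      rw [Set.not_nonempty_iff_eq_empty] at h
      apply hYinf
      apply Set.Finite.subset (Set.finite_Iic n)
      intro z hz
      rw [Set.mem_Iic]
      by_contra hzn
      have hmem : z ∈ {m : ℕ | m ∈ Y ∧ n < m} := ⟨hz, Nat.lt_of_not_le hzn⟩
      rw [h] at hmem
      exact hmem
    exact Nat.sInf_mem hne
  -- dominate nuX Y modulo both ultrafilters by a single strictly monotone G
  obtain ⟨g, hgC, hgU⟩ := hC (fun n => nuX Y n)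
  obtain ⟨g', hg'C, hg'U⟩ := hC' (fun n => nuX Y n)
  set G : ℕ → ℕ := bG g g' with hGdef
  have hG1 : StrictMono G := bG_strictMono g g'
  have hG2 : ∀ n, n < G n := lt_bG g g'
  set D : Set ℕ := {n : ℕ | nuX Y n ≤ G n} with hDdef
  have hDU : D ∈ U := by
    refine Filter.mem_of_superset hgU ?_
    intro n hn
    simp only [Set.mem_setOf_eq] at hn ⊢
    exact le_trans hn (le_trans (le_msum g n) (le_max_left _ _))
  have hDU' : D ∈ U' := by
    refine Filter.mem_of_superset hg'U ?_
    intro n hn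
    simp only [Set.mem_setOf_eq] at hn ⊢
    exact le_trans hn (le_trans (le_msum g' n) (le_max_right _ _))
  -- the pairing maps are finite-to-one
  have hfin0 : FinToOne (p0 G) := by
    intro k
    apply Set.Finite.subset (Set.finite_Iio (beta G (2 * k + 2)))
    intro n hn
    simp only [Set.mem_preimage, Set.mem_singleton_iff, p0] at hn
    have hb1 : idx G n ≤ 2 * k + 1 := by omega
    have hb2 := lt_beta_idx hG2 n
    have hb3 : beta G (idx G n + 1) ≤ beta G (2 * k + 2) :=
      (beta_strictMono hG2).monotone (by omega)
    exact Set.mem_Iio.mpr (lt_of_lt_of_le hb2 hb3)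
  have hfin1 : FinToOne (p1 G) := by
    intro k
    apply Set.Finite.subset (Set.finite_Iio (beta G (2 * k + 2)))
    intro n hn
    simp only [Set.mem_preimage, Set.mem_singleton_iff, p1] at hn
    have hb1 : idx G n ≤ 2 * k + 1 := by omega
    have hb2 := lt_beta_idx hG2 n
    have hb3 : beta G (idx G n + 1) ≤ beta G (2 * k + 2) :=
      (beta_strictMono hG2).monotone (by omega)
    exact Set.mem_Iio.mpr (lt_of_lt_of_le hb2 hb3)
  -- failure of near coherence gives bad sets for every finite-to-one map
  have hWex : ∀ q : ℕ → ℕ, FinToOne q →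
      ∃ W : Set ℕ, q ⁻¹' W ∈ U ∧ (q ⁻¹' W)ᶜ ∈ U' := by
    intro q hq
    by_contra h
    push_neg at h
    apply hNC
    refine ⟨q, q, hq, hq, ?_⟩
    have key : ∀ s : Set ℕ, s ∈ Ultrafilter.map q U → s ∈ Ultrafilter.map q U' := by
      intro s hs
      rw [Ultrafilter.mem_map] at hs ⊢
      have h2 := h s hs
      rwa [Ultrafilter.compl_notMem_iff] at h2
    apply Ultrafilter.coe_injective
    apply Filter.ext
    intro s
    rw [Ultrafilter.mem_coe, Ultrafilter.mem_coe]
    constructor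
    · exact key s
    · intro hs
      by_contra hns
      have hc : sᶜ ∈ Ultrafilter.map q U := by
        rwa [Ultrafilter.compl_mem_iff_notMem]
      have := key sᶜ hc
      rw [Ultrafilter.compl_mem_iff_notMem] at this
      exact this hs
  obtain ⟨hA0U, hA0U'⟩ := Wc_spec (U := U) (U' := U') (hWex (p0 G) hfin0)
  obtain ⟨hA1U, hA1U'⟩ := Wc_spec (U := U) (U' := U') (hWex (p1 G) hfin1)
  set W0 : Set ℕ := Wc U U' (p0 G) with hW0def
  set W1 : Set ℕ := Wc U U' (p1 G) with hW1def
  set A0 : Set ℕ := (p0 G) ⁻¹' W0 with hA0def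
  set A1 : Set ℕ := (p1 G) ⁻¹' W1 with hA1def
  set XE : Set ℕ := {n : ℕ | idx G n % 2 = 0} with hXEdef
  -- the three sets belong to the splitting family
  have hinF : ∀ T ∈ ({XE, A0, A1} : Set (Set ℕ)), ∃ x, F x = T := by
    intro T hT
    rcases hT with rfl | rfl | rfl
    · exact ⟨(⟨g, hgC⟩, ⟨g', hg'C⟩, ⟨0, by omega⟩), by
        simp [hFdef, bSet, hGdef, hXEdef]⟩
    · exact ⟨(⟨g, hgC⟩, ⟨g', hg'C⟩, ⟨1, by omega⟩), by
        simp [hFdef, bSet, hGdef, hA0def, hW0def]⟩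
    · exact ⟨(⟨g, hgC⟩, ⟨g', hg'C⟩, ⟨2, by omega⟩), by
        simp [hFdef, bSet, hGdef, hA1def, hW1def]⟩
  -- tail dichotomies for Y with respect to each of the three sets
  have tail : ∀ T : Set ℕ, (∃ x, F x = T) →
      ∃ N : ℕ, (∀ z ∈ Y, N ≤ z → z ∈ T) ∨ (∀ z ∈ Y, N ≤ z → z ∉ T) := by
    intro T hT
    have hT2 := hYuns T ⟨hT.choose, hT.choose_spec⟩
    by_cases hi : (Y ∩ T).Infinite
    · have h := hT2 hi
      obtain ⟨N, hN⟩ := h.bddAbove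
      refine ⟨N + 1, Or.inl fun z hz hNz => ?_⟩
      by_contra hzT
      have := hN (⟨hz, hzT⟩ : z ∈ Y \ T)
      omega
    · rw [Set.not_infinite] at hi
      obtain ⟨N, hN⟩ := hi.bddAbove
      refine ⟨N + 1, Or.inr fun z hz hNz hzT => ?_⟩
      have := hN (Set.mem_inter hz hzT)
      omega
  obtain ⟨N0, hd0⟩ := tail XE (hinF XE (by simp))
  obtain ⟨N1, hd1⟩ := tail A0 (hinF A0 (by simp))
  obtain ⟨N2, hd2⟩ := tail A1 (hinF A1 (by simp))
  set N : ℕ := max N0 (max N1 N2) with hNdef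
  -- membership translations
  have memA0 : ∀ n : ℕ, n ∈ A0 ↔ idx G n / 2 ∈ W0 := fun n => Iff.rfl
  have memA1 : ∀ n : ℕ, n ∈ A1 ↔ (idx G n + 1) / 2 ∈ W1 := fun n => Iff.rfl
  have memXE : ∀ n : ℕ, n ∈ XE ↔ idx G n % 2 = 0 := fun n => Iff.rfl
  -- main auxiliary facts for a point n ∈ D
  have main : ∀ n : ℕ, n ∈ D → N ≤ n →
      idx G n ≤ idx G (nuX Y n) ∧ idx G (nuX Y n) ≤ idx G n + 1 ∧
        nuX Y n ∈ Y ∧ N ≤ nuX Y n := by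
    intro n hnD hNn
    obtain ⟨hyY, hny⟩ := nu_spec n
    have hyG : nuX Y n ≤ G n := hnD
    exact ⟨idx_mono hG2 hny, idx_le_succ hG1 hG2 hyG, hyY, by omega⟩
  -- pick points on the U side and the U' side
  have hSU : D ∩ (A0 ∩ A1) ∈ U := Filter.inter_mem hDU (Filter.inter_mem hA0U hA1U)
  have hSU' : D ∩ (A0ᶜ ∩ A1ᶜ) ∈ U' := by
    refine Filter.inter_mem hDU' (Filter.inter_mem ?_ hA1U')
    exact hA0U'
  obtain ⟨n, hnS, hnN⟩ := pick U hU _ hSU N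
  obtain ⟨n', hnS', hnN'⟩ := pick U' hU' _ hSU' N
  obtain ⟨hjm, hmj, hyY, hyN⟩ := main n hnS.1 hnN
  obtain ⟨hjm', hmj', hyY', hyN'⟩ := main n' hnS'.1 hnN'
  have hn0 : idx G n / 2 ∈ W0 := (memA0 n).mp hnS.2.1
  have hn1 : (idx G n + 1) / 2 ∈ W1 := (memA1 n).mp hnS.2.2
  have hn0' : idx G n' / 2 ∉ W0 := fun h => hnS'.2.1 ((memA0 n').mpr h)
  have hn1' : (idx G n' + 1) / 2 ∉ W1 := fun h => hnS'.2.2 ((memA1 n').mpr h)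
  have hN0le : N0 ≤ N := by rw [hNdef]; exact le_max_left _ _
  have hN1le : N1 ≤ N := by
    rw [hNdef]; exact le_trans (le_max_left _ _) (le_max_right _ _)
  have hN2le : N2 ≤ N := by
    rw [hNdef]; exact le_trans (le_max_right _ _) (le_max_right _ _)
  -- case analysis on the tail behaviour of Y
  rcases hd1 with h0in | h0out
  · rcases hd2 with h1in | h1out
    · -- Y-tail ⊆ A0 ∩ A1 : use the U' point
      have hy0 : idx G (nuX Y n') / 2 ∈ W0 :=
        (memA0 _).mp (h0in _ hyY' (by omega))
      have hy1 : (idx G (nuX Y n') + 1) / 2 ∈ W1 :=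
        (memA1 _).mp (h1in _ hyY' (by omega))
      have ne1 : idx G n' / 2 ≠ idx G (nuX Y n') / 2 := fun e => hn0' (e ▸ hy0)
      have ne2 : (idx G n' + 1) / 2 ≠ (idx G (nuX Y n') + 1) / 2 :=
        fun e => hn1' (e ▸ hy1)
      omega
    · -- Y-tail ⊆ A0 \ A1 (mixed): use the parity of blocks
      rcases hd0 with hxin | hxout
      · -- Y-tail in even blocks: use the U point
        have hy1 : (idx G (nuX Y n) + 1) / 2 ∉ W1 :=
          fun h => (h1out _ hyY (by omega)) ((memA1 _).mpr h)
        have hx : idx G (nuX Y n) % 2 = 0 := (memXE _).mp (hxin _ hyY (by omega))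
        have ne2 : (idx G n + 1) / 2 ≠ (idx G (nuX Y n) + 1) / 2 :=
          fun e => hy1 (e ▸ hn1)
        omega
      · -- Y-tail in odd blocks: use the U' point
        have hy0 : idx G (nuX Y n') / 2 ∈ W0 :=
          (memA0 _).mp (h0in _ hyY' (by omega))
        have hx : idx G (nuX Y n') % 2 ≠ 0 :=
          fun h => (hxout _ hyY' (by omega)) ((memXE _).mpr h)
        have ne1 : idx G n' / 2 ≠ idx G (nuX Y n') / 2 := fun e => hn0' (e ▸ hy0)
        omega
  · rcases hd2 with h1in | h1out
    · -- Y-tail ⊆ A1 \ A0 (mixed)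
      rcases hd0 with hxin | hxout
      · -- Y-tail in even blocks: use the U' point
        have hy1 : (idx G (nuX Y n') + 1) / 2 ∈ W1 :=
          (memA1 _).mp (h1in _ hyY' (by omega))
        have hx : idx G (nuX Y n') % 2 = 0 := (memXE _).mp (hxin _ hyY' (by omega))
        have ne2 : (idx G n' + 1) / 2 ≠ (idx G (nuX Y n') + 1) / 2 :=
          fun e => hn1' (e ▸ hy1)
        omega
      · -- Y-tail in odd blocks: use the U point
        have hy0 : idx G (nuX Y n) / 2 ∉ W0 :=
          fun h => (h0out _ hyY (by omega)) ((memA0 _).mpr h)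
        have hx : idx G (nuX Y n) % 2 ≠ 0 :=
          fun h => (hxout _ hyY (by omega)) ((memXE _).mpr h)
        have ne1 : idx G n / 2 ≠ idx G (nuX Y n) / 2 := fun e => hy0 (e ▸ hn0)
        omega
    · -- Y-tail ⊆ A0ᶜ ∩ A1ᶜ : use the U point
      have hy0 : idx G (nuX Y n) / 2 ∉ W0 :=
        fun h => (h0out _ hyY (by omega)) ((memA0 _).mpr h)
      have hy1 : (idx G (nuX Y n) + 1) / 2 ∉ W1 :=
        fun h => (h1out _ hyY (by omega)) ((memA1 _).mpr h)
      have ne1 : idx G n / 2 ≠ idx G (nuX Y n) / 2 := fun e => hy0 (e ▸ hn0)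
      have ne2 : (idx G n + 1) / 2 ≠ (idx G (nuX Y n) + 1) / 2 :=
        fun e => hy1 (e ▸ hn1)
      omega
end

section
/- At most one cardinal smaller than the splitting number 𝔰 can occur as the cofinality of an ultrapower of ℕ: if U and U' are nonprincipal ultrafilters on ℕ with cf(U-prod ω) < 𝔰 and cf(U'-prod ω) < 𝔰, then cf(U-prod ω) = cf(U'-prod ω). -/
open Cardinal Set Filter

/-! ### Auxiliary material for the proof -/

/-- The monotone (running-max) hull of a function. -/
def msup (g : ℕ → ℕ) (n : ℕ) : ℕ := (Finset.range (n + 1)).sup g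

lemma le_msup (g : ℕ → ℕ) (n : ℕ) : g n ≤ msup g n :=
  Finset.le_sup (Finset.self_mem_range_succ n)

lemma msup_mono (g : ℕ → ℕ) : Monotone (msup g) := fun a b hab =>
  Finset.sup_mono (Finset.range_subset_range.2 (by omega))

/-- The `c`-blur of a set `D`: all points lying in some interval `(d, c d]` with `d ∈ D`. -/
def blur (c : ℕ → ℕ) (D : Set ℕ) : Set ℕ := {x | ∃ d ∈ D, d < x ∧ x ≤ c d}

lemma mem_U_infinite {U : Ultrafilter ℕ} (hU : Nonprincipal U) {A : Set ℕ}
    (hA : A ∈ U) : A.Infinite := by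
  have h : ¬ A.Finite := by
    intro hfin
    obtain ⟨a, _, ha⟩ := Ultrafilter.eq_pure_of_finite_mem hfin hA
    exact hU a ha
  exact h

lemma nuX_mem {X : Set ℕ} (hX : X.Infinite) (n : ℕ) : nuX X n ∈ X ∧ n < nuX X n := by
  have hne : {m : ℕ | m ∈ X ∧ n < m}.Nonempty := by
    obtain ⟨b, hb, hb2⟩ := hX.exists_gt n
    exact ⟨b, hb, hb2⟩
  exact Nat.sInf_mem hne

lemma aleph0_le_aux {S : Set (ℕ → ℕ)}
    (h : ∀ f : ℕ → ℕ, ∃ g ∈ S, {n : ℕ | f n ≤ g n}.Nonempty) : Cardinal.aleph0 ≤ #S := by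
  rw [Cardinal.aleph0_le_mk_iff, Set.infinite_coe_iff]
  by_contra hninf
  rw [Set.not_infinite] at hninf
  obtain ⟨g, hgS, n, hn⟩ := h (fun n => (hninf.toFinset.sup fun g => g n) + 1)
  have hle : g n ≤ hninf.toFinset.sup (fun g => g n) :=
    Finset.le_sup (f := fun g => g n) ((Set.Finite.mem_toFinset hninf).2 hgS)
  simp only [Set.mem_setOf_eq] at hn
  exact Nat.not_succ_le_self _ (hn.trans hle)

lemma cf_set_nonempty (U : Ultrafilter ℕ) :
    {c : Cardinal | ∃ C : Set (ℕ → ℕ), UCofinal U C ∧ c = #C}.Nonempty := by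
  refine ⟨#(Set.univ : Set (ℕ → ℕ)), Set.univ, fun f => ⟨f, Set.mem_univ f, ?_⟩, rfl⟩
  have h : {n : ℕ | f n ≤ f n} = Set.univ := by simp
  rw [h]
  exact Filter.univ_mem

lemma bounding_set_nonempty :
    {c : Cardinal | ∃ B : Set (ℕ → ℕ),
      (∀ f : ℕ → ℕ, ∃ g ∈ B, {n : ℕ | f n ≤ g n}.Infinite) ∧ c = #B}.Nonempty := by
  refine ⟨#(Set.univ : Set (ℕ → ℕ)), Set.univ, fun f => ⟨f, Set.mem_univ f, ?_⟩, rfl⟩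
  simpa using Set.infinite_univ (α := ℕ)

/-- Key lemma: a cofinality below the splitting number must equal the bounding number. -/
lemma cf_eq_bounding {U : Ultrafilter ℕ} (hU : Nonprincipal U)
    (h1 : cfUProd U < splittingNumber) : cfUProd U = boundingNumber := by
  have hmemC : cfUProd U ∈ {c : Cardinal | ∃ C : Set (ℕ → ℕ), UCofinal U C ∧ c = #C} :=
    csInf_mem (cf_set_nonempty U)
  obtain ⟨C, hC, hCcard⟩ := hmemC
  -- `boundingNumber ≤ cfUProd U` : a `≤_U`-cofinal family is unbounded.
  have hble : boundingNumber ≤ cfUProd U := by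
    rw [hCcard]
    refine csInf_le (OrderBot.bddBelow _) ⟨C, fun f => ?_, rfl⟩
    obtain ⟨g, hgC, hmem⟩ := hC f
    exact ⟨g, hgC, mem_U_infinite hU hmem⟩
  -- `ℵ₀ ≤ cfUProd U`.
  have haleph0k : Cardinal.aleph0 ≤ cfUProd U := by
    refine le_csInf (cf_set_nonempty U) ?_
    rintro c ⟨C', hC', rfl⟩
    refine aleph0_le_aux fun f => ?_
    obtain ⟨g, hgC, hmem⟩ := hC' f
    exact ⟨g, hgC, (mem_U_infinite hU hmem).nonempty⟩
  refine le_antisymm ?_ hble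
  by_contra hnle
  have hbk : boundingNumber < cfUProd U := lt_of_not_ge hnle
  -- Realize the bounding number by a family `B`.
  have hmemB : boundingNumber ∈ {c : Cardinal | ∃ B : Set (ℕ → ℕ),
      (∀ f : ℕ → ℕ, ∃ g ∈ B, {n : ℕ | f n ≤ g n}.Infinite) ∧ c = #B} :=
    csInf_mem bounding_set_nonempty
  obtain ⟨B, hB, hBcard⟩ := hmemB
  -- The monotone hulls of members of `B` are too few to be `≤_U`-cofinal.
  have hB2 : ¬ UCofinal U (msup '' B) := by
    intro hcof
    have h1' : cfUProd U ≤ #(msup '' B) := csInf_le (OrderBot.bddBelow _) ⟨msup '' B, hcof, rfl⟩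
    have h2' : #(msup '' B) ≤ #B := Cardinal.mk_image_le
    rw [← hBcard] at h2'
    exact absurd (h1'.trans h2') (not_le.2 hbk)
  unfold UCofinal at hB2
  push_neg at hB2
  obtain ⟨h0, hh0⟩ := hB2
  -- The sets `D g` are in `U` for `g ∈ B`.
  set D : (ℕ → ℕ) → Set ℕ := fun g => {n | msup g n < msup h0 n} with hDdef
  have hD : ∀ g ∈ B, D g ∈ U := by
    intro g hg
    have hnot : {n : ℕ | h0 n ≤ msup g n} ∉ U := hh0 (msup g) ⟨g, hg, rfl⟩
    have hcompl : {n : ℕ | h0 n ≤ msup g n}ᶜ ∈ U :=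
      (Ultrafilter.compl_mem_iff_notMem).2 hnot
    refine Filter.mem_of_superset hcompl ?_
    intro n hn
    simp only [Set.mem_compl_iff, Set.mem_setOf_eq, not_le] at hn
    have := le_msup h0 n
    simp only [hDdef, Set.mem_setOf_eq]
    omega
  -- The family of blurred sets is small, hence not splitting.
  set 𝒮 : Set (Set ℕ) :=
    Set.range (fun p : ↥B × ↥C => blur (p.2 : ℕ → ℕ) (D (p.1 : ℕ → ℕ))) with h𝒮def
  have hScard : #𝒮 < splittingNumber := by
    have hr : #𝒮 ≤ #(↥B × ↥C) := Cardinal.mk_range_le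
    have hprod : #(↥B × ↥C) = #B * #C := by
      rw [Cardinal.mk_prod, Cardinal.lift_id, Cardinal.lift_id]
    have hBk : #B ≤ cfUProd U := by rw [← hBcard]; exact hbk.le
    have hCk : #C ≤ cfUProd U := le_of_eq hCcard.symm
    have hmul : #B * #C ≤ cfUProd U * cfUProd U := mul_le_mul' hBk hCk
    rw [Cardinal.mul_eq_self haleph0k] at hmul
    calc #𝒮 ≤ #B * #C := hprod ▸ hr
      _ ≤ cfUProd U := hmul
      _ < splittingNumber := h1
  have hnsp : ¬ (∀ X : Set ℕ, X.Infinite → ∃ Y ∈ 𝒮, (X ∩ Y).Infinite ∧ (X \ Y).Infinite) := by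
    intro hsp
    exact absurd (csInf_le (OrderBot.bddBelow _) ⟨𝒮, hsp, rfl⟩ : splittingNumber ≤ #𝒮)
      (not_le.2 hScard)
  push_neg at hnsp
  obtain ⟨X, hXinf, hXuns⟩ := hnsp
  -- Apply cofinality to the next-element function of `X`.
  obtain ⟨c, hcC, hcE⟩ := hC (fun n => nuX X n)
  -- For every `g ∈ B`, `X` is almost contained in the blur of `D g`.
  have hblurfin : ∀ g ∈ B, (X \ blur c (D g)).Finite := by
    intro g hg
    have hYmem : blur c (D g) ∈ 𝒮 := ⟨⟨⟨g, hg⟩, ⟨c, hcC⟩⟩, rfl⟩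
    have hinter : (X ∩ blur c (D g)).Infinite := by
      apply Set.infinite_of_forall_exists_gt
      intro a
      have hEDg : ({n : ℕ | nuX X n ≤ c n} ∩ D g) ∈ U := Filter.inter_mem hcE (hD g hg)
      obtain ⟨n, ⟨hnE, hnD⟩, hna⟩ := (mem_U_infinite hU hEDg).exists_gt a
      refine ⟨nuX X n, ⟨(nuX_mem hXinf n).1, ?_⟩, ?_⟩
      · exact ⟨n, hnD, (nuX_mem hXinf n).2, hnE⟩
      · exact lt_trans hna (nuX_mem hXinf n).2
    have hnot := hXuns _ hYmem hinter
    exact hnot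
  -- The single function `Hf` eventually dominates every monotone hull from `B`.
  set G : ℕ → ℕ := fun n => max n (msup c n) with hGdef
  set Hf : ℕ → ℕ := fun n => msup h0 (nuX X (G n)) with hHdef
  have key : ∀ g ∈ B, ∃ N, ∀ n, N ≤ n → msup g n < Hf n := by
    intro g hg
    obtain ⟨m, hm⟩ := (hblurfin g hg).bddAbove
    refine ⟨m + 1, fun n hn => ?_⟩
    set x := nuX X (G n) with hxdef
    have hxX : x ∈ X := (nuX_mem hXinf (G n)).1
    have hxG : G n < x := (nuX_mem hXinf (G n)).2
    have hnG : n ≤ G n := le_max_left _ _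
    have hxblur : x ∈ blur c (D g) := by
      by_contra hxnb
      have hxF : x ∈ X \ blur c (D g) := ⟨hxX, hxnb⟩
      have := hm hxF
      omega
    obtain ⟨d, hdD, hdx, hxcd⟩ := hxblur
    have hnd : n < d := by
      by_contra hdn
      push_neg at hdn
      have hcd : c d ≤ msup c n := Finset.le_sup (Finset.mem_range.2 (by omega))
      have : msup c n ≤ G n := le_max_right _ _
      omega
    have h1' : msup g n ≤ msup g d := msup_mono g hnd.le
    have h2' : msup g d < msup h0 d := hdD
    have h3' : msup h0 d ≤ msup h0 x := msup_mono h0 hdx.le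
    simp only [hHdef]
    rw [← hxdef]
    omega
  -- Contradiction with unboundedness of `B`.
  obtain ⟨g, hgB, hginf⟩ := hB (fun n => Hf n + 1)
  obtain ⟨N, hN⟩ := key g hgB
  obtain ⟨n, hn, hNn⟩ := hginf.exists_gt N
  simp only [Set.mem_setOf_eq] at hn
  have hgn : g n ≤ msup g n := le_msup g n
  have := hN n hNn.le
  omega

/-- At most one cardinal smaller than 𝔰 occurs as the cofinality of an
ultrapower of ℕ. -/
theorem stmt_5 (U U' : Ultrafilter ℕ) (hU : Nonprincipal U) (hU' : Nonprincipal U')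
    (h1 : cfUProd U < splittingNumber) (h2 : cfUProd U' < splittingNumber) :
    cfUProd U = cfUProd U' := by
  rw [cf_eq_bounding hU h1, cf_eq_bounding hU' h2]
end

section
/- Let f : ℕ → ℕ satisfy f(n) ≥ n for all n, and let ℕ be partitioned into consecutive finite intervals. Then there exist two disjoint sets X and Y, each a union of infinitely many intervals of the partition, such that for all but finitely many p ∈ ℕ, either f(p) < ν_X(p) or f(p) < ν_Y(p). -/
/-!
Choose a sparse subsequence of blocks `b 0 < b 1 < ⋯` so that `f` maps every point before the
end of block `b i` below the start of block `b (i + 1)`, and let `X` and `Y` be the unions of the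
blocks `b i` with `i` even and odd respectively. Given `p`, let `i` be least such that `p` lies
before the end of block `b i`. Every other selected block either ends by `p` or starts no earlier
than block `b (i + 1)`, so whichever of `X`, `Y` misses block `b i` has its next element after
`p` above `f p`.
-/

open Cardinal Set Filter

lemma exists_strictMono_le_apply_succ (g : ℕ → ℕ) :
    ∃ b : ℕ → ℕ, StrictMono b ∧ ∀ i, g (b i) ≤ b (i + 1) := by
  let b : ℕ → ℕ := fun n => Nat.rec 0 (fun _ x => max (x + 1) (g x)) n
  exact ⟨b, strictMono_nat_of_lt_succ fun i => (Nat.lt_succ_self _).trans_le (le_max_left _ _),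
    fun i => le_max_right _ _⟩

lemma exists_sparse_blocks (f : ℕ → ℕ) {a : ℕ → ℕ} (ha : StrictMono a) :
    ∃ b : ℕ → ℕ, StrictMono b ∧ ∀ i p, p < a (b i + 1) → f p < a (b (i + 1)) := by
  obtain ⟨b, hb, hgb⟩ :=
    exists_strictMono_le_apply_succ fun n => (Finset.range (a (n + 1))).sup f + 1
  refine ⟨b, hb, fun i p hp => ?_⟩
  calc f p ≤ (Finset.range (a (b i + 1))).sup f := Finset.le_sup (Finset.mem_range.2 hp)
    _ < b (i + 1) := hgb i
    _ ≤ a (b (i + 1)) := ha.le_apply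

lemma disjoint_biUnion_Ico {a : ℕ → ℕ} (ha : Monotone a) {K L : Set ℕ} (hKL : Disjoint K L) :
    Disjoint (⋃ k ∈ K, Ico (a k) (a (k + 1))) (⋃ l ∈ L, Ico (a l) (a (l + 1))) :=
  disjoint_iUnion₂_left.2 fun _ hk => disjoint_iUnion₂_right.2 fun _ hl =>
    ha.pairwise_disjoint_on_Ico_succ (hKL.ne_of_mem hk hl)

lemma le_nuX_biUnion_Ico {a : ℕ → ℕ} (ha : StrictMono a) {K : Set ℕ} (hK : K.Infinite)
    {p m : ℕ} (h : ∀ k ∈ K, a (k + 1) ≤ p ∨ m ≤ a k) :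
    m ≤ nuX (⋃ k ∈ K, Ico (a k) (a (k + 1))) p := by
  -- `K` is infinite, so the set whose infimum `nuX` takes is nonempty (`sInf ∅ = 0`).
  obtain ⟨k, hk, hpk⟩ := hK.exists_gt p
  refine le_csInf ⟨a k, mem_biUnion hk ⟨le_rfl, ha k.lt_succ_self⟩, hpk.trans_le ha.le_apply⟩ ?_
  rintro x ⟨hx, hpx⟩
  obtain ⟨k, hk, hxk⟩ := mem_iUnion₂.1 hx
  rcases h k hk with hkp | hmk
  · exact absurd hxk.2 (by omega)
  · exact hmk.trans hxk.1

theorem stmt_8_general (f : ℕ → ℕ)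
    (a : ℕ → ℕ) (ha : StrictMono a) :
    ∃ K L : Set ℕ, K.Infinite ∧ L.Infinite ∧
      Disjoint (⋃ k ∈ K, Set.Ico (a k) (a (k + 1)))
        (⋃ k ∈ L, Set.Ico (a k) (a (k + 1))) ∧
      ∀ᶠ p in Filter.cofinite,
        f p < nuX (⋃ k ∈ K, Set.Ico (a k) (a (k + 1))) p ∨
        f p < nuX (⋃ k ∈ L, Set.Ico (a k) (a (k + 1))) p := by
  obtain ⟨b, hb, hfb⟩ := exists_sparse_blocks f ha
  have hinf : ∀ c : ℕ → ℕ, c.Injective → (range (b ∘ c)).Infinite := fun c hc =>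
    infinite_range_of_injective (hb.injective.comp hc)
  refine ⟨range (b ∘ (2 * ·)), range (b ∘ (2 * · + 1)), hinf _ fun _ _ _ => by omega,
    hinf _ fun _ _ _ => by omega, disjoint_biUnion_Ico ha.monotone ?_, .of_forall fun p => ?_⟩
  · exact disjoint_left.2 fun _ ⟨j, hj⟩ ⟨l, hl⟩ => by
      have : 2 * j = 2 * l + 1 := hb.injective (hj.trans hl.symm); omega
  obtain ⟨i, hpi, hmin⟩ : ∃ i, p < a (b i + 1) ∧ ∀ j < i, a (b j + 1) ≤ p := by
    have hex : ∃ i, p < a (b i + 1) :=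
      ⟨p, hb.le_apply.trans_lt ((b p).lt_succ_self.trans_le ha.le_apply)⟩
    exact ⟨Nat.find hex, Nat.find_spec hex, fun j hj => not_lt.1 (Nat.find_min hex hj)⟩
  have hfar : ∀ j ≠ i, a (b j + 1) ≤ p ∨ a (b (i + 1)) ≤ a (b j) := fun j hj =>
    (lt_or_gt_of_ne hj).imp (hmin j) fun hij => ha.monotone (hb.monotone hij)
  have hfp : f p < a (b (i + 1)) := hfb i p hpi
  have hnu : ∀ c : ℕ → ℕ, c.Injective → (∀ j, c j ≠ i) →
      f p < nuX (⋃ k ∈ range (b ∘ c), Ico (a k) (a (k + 1))) p := fun c hc hci =>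
    hfp.trans_le (le_nuX_biUnion_Ico ha (hinf c hc) (forall_mem_range.2 fun j => hfar _ (hci j)))
  obtain ⟨r, hr | hr⟩ := Nat.even_or_odd' i
  · exact .inr (hnu _ (fun _ _ _ => by omega) fun _ => by omega)
  · exact .inl (hnu _ (fun _ _ _ => by omega) fun _ => by omega)

/-- Given f with f(n) ≥ n and a partition of ℕ into consecutive finite
intervals, there are two disjoint sets X and Y, each a union of infinitely
many intervals of the partition, such that for all but finitely many p,
either f(p) < ν_X(p) or f(p) < ν_Y(p). -/
theorem stmt_8 (f : ℕ → ℕ) (hf : ∀ n : ℕ, n ≤ f n)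
    (a : ℕ → ℕ) (ha0 : a 0 = 0) (ha : StrictMono a) :
    ∃ K L : Set ℕ, K.Infinite ∧ L.Infinite ∧
      Disjoint (⋃ k ∈ K, Set.Ico (a k) (a (k + 1)))
        (⋃ k ∈ L, Set.Ico (a k) (a (k + 1))) ∧
      ∀ᶠ p in Filter.cofinite,
        f p < nuX (⋃ k ∈ K, Set.Ico (a k) (a (k + 1))) p ∨
        f p < nuX (⋃ k ∈ L, Set.Ico (a k) (a (k + 1))) p :=
  stmt_8_general f a ha
end

section
/- If U and U' are nearly coherent nonprincipal ultrafilters on ℕ, then the ultrapowers have the same cofinality: cf(U-prod ω) = cf(U'-prod ω). -/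
open Cardinal Set Filter

/-!
A finite-to-one map `f` does not change the cofinality of the ultrapower: a function `h` on the
image side pulls back to `h ∘ f`, and a function `g` on the domain side is dominated fibrewise
by `n ↦ sup g(f⁻¹{n})`, which is finite because the fibres are finite. These two translations carry
cofinal families in either direction, so `cf(f(U)-prod ω) = cf(U-prod ω)`, and nearly coherent
ultrafilters are linked through their common image.
-/

theorem UCofinal.image {U V : Ultrafilter ℕ} {C : Set (ℕ → ℕ)} (hC : UCofinal V C)
    (down up : (ℕ → ℕ) → ℕ → ℕ)
    (h : ∀ f g, {n | up f n ≤ g n} ∈ V → {n | f n ≤ down g n} ∈ U) :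
    UCofinal U (down '' C) := by
  intro f
  obtain ⟨g, hg, hfg⟩ := hC (up f)
  exact ⟨down g, mem_image_of_mem down hg, h f g hfg⟩

theorem cfUProd_le_of_transfer {U V : Ultrafilter ℕ} (down up : (ℕ → ℕ) → ℕ → ℕ)
    (h : ∀ f g, {n | up f n ≤ g n} ∈ V → {n | f n ≤ down g n} ∈ U) :
    cfUProd U ≤ cfUProd V := by
  have hne : {c : Cardinal | ∃ C, UCofinal V C ∧ c = #C}.Nonempty :=
    ⟨_, univ, fun g => ⟨g, trivial, Eventually.of_forall (f := (V : Filter ℕ)) fun _ => le_rfl⟩,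
      rfl⟩
  obtain ⟨C, hC, hcf⟩ := csInf_mem hne
  calc cfUProd U ≤ #(down '' C) := csInf_le' ⟨_, hC.image down up h, rfl⟩
    _ ≤ #C := mk_image_le
    _ = cfUProd V := hcf.symm

noncomputable def fiberSup (f g : ℕ → ℕ) (n : ℕ) : ℕ := sSup (g '' (f ⁻¹' {n}))

theorem le_fiberSup {f : ℕ → ℕ} (hf : FinToOne f) (g : ℕ → ℕ) (m : ℕ) :
    g m ≤ fiberSup f g (f m) :=
  le_csSup ((hf (f m)).image g).bddAbove ⟨m, rfl, rfl⟩

theorem cfUProd_map_le {f : ℕ → ℕ} (hf : FinToOne f) (U : Ultrafilter ℕ) :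
    cfUProd (Ultrafilter.map f U) ≤ cfUProd U := by
  refine cfUProd_le_of_transfer (fiberSup f) (· ∘ f) fun h g hhg => ?_
  rw [Ultrafilter.mem_map]
  exact mem_of_superset hhg fun m hm => hm.trans (le_fiberSup hf g m)

theorem le_cfUProd_map {f : ℕ → ℕ} (hf : FinToOne f) (U : Ultrafilter ℕ) :
    cfUProd U ≤ cfUProd (Ultrafilter.map f U) := by
  refine cfUProd_le_of_transfer (· ∘ f) (fiberSup f) fun h g hhg => ?_
  rw [Ultrafilter.mem_map] at hhg
  exact mem_of_superset hhg fun m hm => (le_fiberSup hf h m).trans hm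

theorem cfUProd_map {f : ℕ → ℕ} (hf : FinToOne f) (U : Ultrafilter ℕ) :
    cfUProd (Ultrafilter.map f U) = cfUProd U :=
  (cfUProd_map_le hf U).antisymm (le_cfUProd_map hf U)

theorem stmt_11_general (U U' : Ultrafilter ℕ)
    (h : NearlyCoherent U U') :
    cfUProd U = cfUProd U' := by
  obtain ⟨f, f', hf, hf', hmap⟩ := h
  calc cfUProd U = cfUProd (Ultrafilter.map f U) := (cfUProd_map hf U).symm
    _ = cfUProd (Ultrafilter.map f' U') := by rw [hmap]
    _ = cfUProd U' := cfUProd_map hf' U'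

/-- Nearly coherent ultrafilters give ultrapowers of the same cofinality. -/
theorem stmt_11 (U U' : Ultrafilter ℕ) (hU : Nonprincipal U) (hU' : Nonprincipal U')
    (h : NearlyCoherent U U') :
    cfUProd U = cfUProd U' :=
  stmt_11_general U U' h
end

section
/- Let U and U' be nonprincipal ultrafilters on ℕ that are not nearly coherent, let h : ℕ → ℕ, and let ℕ be partitioned into consecutive finite intervals I_n = [a_n, a_{n+1}) such that h(x) < a_{n+1} for all x < a_n. Then there exist disjoint sets E and E', each a union of intervals of the partition, such that every infinite X ⊆ ℕ with ν_X ≤_U h has X ∩ E infinite, and every infinite X ⊆ ℕ with ν_X ≤_{U'} h has X ∩ E' infinite; in particular every such X with both ν_X ≤_U h and ν_X ≤_{U'} h is split by E. -/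
open Cardinal Set Filter

/-!
Let `m(n)` be the index of the interval containing `n`. If `ν_X(n) ≤ h(n)` then
`n < ν_X(n) < a_{m(n)+2}`, so `ν_X(n)` lies in `I_{m(n)} ∪ I_{m(n)+1}`. Hence, for every
`A ∈ m(U)`, the union of the intervals indexed by `A ∪ (A + 1)` meets every such `X`
infinitely often. The map `m` is finite-to-one, so by non-near-coherence `m(U)` differs from
the images of `m(U')` under `k ↦ k`, `k ↦ k + 1` and `k ↦ k - 1`; this yields `A ∈ m(U)` and
`A' ∈ m(U')` with `A ∪ (A + 1)` and `A' ∪ (A' + 1)` disjoint.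
-/

lemma Nonprincipal.infinite_of_mem_s13 {U : Ultrafilter ℕ} (hU : Nonprincipal U) {s : Set ℕ}
    (hs : s ∈ U) : s.Infinite := fun hf =>
  let ⟨x, _, hx⟩ := Ultrafilter.eq_pure_of_finite_mem hf hs
  hU x hx

lemma Ultrafilter.exists_mem_compl_mem_of_ne {α : Type*} {V W : Ultrafilter α} (h : V ≠ W) :
    ∃ A ∈ V, Aᶜ ∈ W := by
  by_contra! hc
  exact h <| Ultrafilter.eq_of_le fun A hA => by_contra fun hAV =>
    hc _ (Ultrafilter.compl_mem_iff_notMem.2 hAV) (by rwa [compl_compl])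

lemma FinToOne.comp {f g : ℕ → ℕ} (hg : FinToOne g) (hf : FinToOne f) : FinToOne (g ∘ f) :=
  fun n => (hg n).preimage' fun m _ => hf m

lemma finToOne_id : FinToOne id := fun n => finite_singleton n

lemma finToOne_add_one : FinToOne (· + 1) := fun n =>
  (finite_singleton (n - 1)).subset fun m (hm : m + 1 = n) => by
    simp only [mem_singleton_iff]; omega

lemma finToOne_sub_one : FinToOne (· - 1) := fun n =>
  (finite_Iic (n + 1)).subset fun m (hm : m - 1 = n) => by simp only [mem_Iic]; omega

/-- `A ∪ (A + 1)`; the form `m - 1 ∈ A` is harmless at `m = 0`, where `0 - 1 = 0`. -/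
def withSucc (A : Set ℕ) : Set ℕ := A ∪ (· - 1) ⁻¹' A

lemma exists_disjoint_withSucc {V W : Ultrafilter ℕ} (h : ∀ g, FinToOne g → V ≠ W.map g) :
    ∃ A ∈ V, ∃ A' ∈ W, Disjoint (withSucc A) (withSucc A') := by
  obtain ⟨A₀, hA₀, hA₀c⟩ := Ultrafilter.exists_mem_compl_mem_of_ne (h id finToOne_id)
  obtain ⟨Ap, hAp, hApc⟩ := Ultrafilter.exists_mem_compl_mem_of_ne (h _ finToOne_add_one)
  obtain ⟨Am, hAm, hAmc⟩ := Ultrafilter.exists_mem_compl_mem_of_ne (h _ finToOne_sub_one)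
  set A := A₀ ∩ Ap ∩ Am
  refine ⟨A, inter_mem (inter_mem hA₀ hAp) hAm,
    {j | j ∉ A ∧ j + 1 ∉ A ∧ j - 1 ∉ A}, ?_, ?_⟩
  · filter_upwards [Ultrafilter.mem_map.1 hA₀c, Ultrafilter.mem_map.1 hApc,
      Ultrafilter.mem_map.1 hAmc] with j h₀ hp hm
    exact ⟨fun hj => h₀ hj.1.1, fun hj => hp hj.1.2, fun hj => hm hj.2⟩
  · refine disjoint_left.2 fun m hm hm' => ?_
    rcases hm with hm | hm <;> rcases hm' with hm' | hm'
    · exact hm'.1 hm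
    · rcases Nat.eq_zero_or_pos m with rfl | hpos
      · exact hm'.1 hm
      · exact hm'.2.1 (by rwa [Nat.sub_add_cancel hpos])
    · exact hm'.2.2 hm
    · exact hm'.1 hm

section Blocks

variable {a : ℕ → ℕ}

def blockUnion (a : ℕ → ℕ) (K : Set ℕ) : Set ℕ := ⋃ n ∈ K, Ico (a n) (a (n + 1))

lemma disjoint_blockUnion (ha : StrictMono a) {K K' : Set ℕ} (h : Disjoint K K') :
    Disjoint (blockUnion a K) (blockUnion a K') := by
  have hI := ha.monotone.pairwise_disjoint_on_Ico_succ
  simp only [Order.succ_eq_add_one] at hI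
  exact disjoint_iUnion₂_left.2 fun m hm => disjoint_iUnion₂_right.2 fun m' hm' =>
    hI (h.ne_of_mem hm hm')

lemma mem_blockUnion_withSucc {K : Set ℕ} {m y : ℕ} (hm : m ∈ K)
    (hy : y ∈ Ico (a m) (a (m + 2))) : y ∈ blockUnion a (withSucc K) := by
  by_cases hy' : y < a (m + 1)
  · exact mem_biUnion (Or.inl hm) ⟨hy.1, hy'⟩
  · exact mem_biUnion (Or.inr (by simpa using hm) : m + 1 ∈ withSucc K) ⟨not_lt.1 hy', hy.2⟩

/-- The index of the interval `I_n` containing a given number. -/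
def blockIdx (a : ℕ → ℕ) (n : ℕ) : ℕ := Nat.findGreatest (fun m => a m ≤ n) n

lemma mem_Ico_blockIdx (ha0 : a 0 = 0) (ha : StrictMono a) (n : ℕ) :
    n ∈ Ico (a (blockIdx a n)) (a (blockIdx a n + 1)) :=
  ⟨Nat.findGreatest_spec (P := fun m => a m ≤ n) (Nat.zero_le n) (ha0.trans_le (Nat.zero_le n)),
    not_le.1 fun hle =>
      Nat.findGreatest_is_greatest (Nat.lt_succ_self _) (ha.le_apply.trans hle) hle⟩

lemma finToOne_blockIdx (ha0 : a 0 = 0) (ha : StrictMono a) : FinToOne (blockIdx a) := fun m =>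
  (finite_Iio (a (m + 1))).subset fun n (hn : blockIdx a n = m) =>
    hn ▸ (mem_Ico_blockIdx ha0 ha n).2

end Blocks

lemma infinite_inter_blockUnion_withSucc {U : Ultrafilter ℕ} (hU : Nonprincipal U)
    {h a : ℕ → ℕ} (ha0 : a 0 = 0) (ha : StrictMono a)
    (hgrow : ∀ n x, x < a n → h x < a (n + 1)) {A : Set ℕ} (hA : A ∈ U.map (blockIdx a))
    (X : Set ℕ) (hX : X.Infinite) (hXU : {n | nuX X n ≤ h n} ∈ U) :
    (X ∩ blockUnion a (withSucc A)).Infinite := by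
  have hS := hU.infinite_of_mem_s13 (inter_mem hXU (Ultrafilter.mem_map.1 hA))
  refine infinite_of_forall_exists_gt fun N => ?_
  obtain ⟨n, ⟨hnh, hnA⟩, hNn⟩ := hS.exists_gt N
  obtain ⟨hνX, hnν⟩ := nuX_mem hX n
  have hn := mem_Ico_blockIdx ha0 ha n
  exact ⟨nuX X n, ⟨hνX, mem_blockUnion_withSucc hnA
    ⟨hn.1.trans hnν.le, hnh.trans_lt (hgrow _ n hn.2)⟩⟩, hNn.trans hnν⟩

/-- If U and U' are not nearly coherent and ℕ is partitioned into consecutive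
finite intervals I_n = [a_n, a_{n+1}) with h(x) < a_{n+1} for all x < a_n, then
there are disjoint sets E, E', each a union of intervals of the partition, such
that every infinite X with ν_X ≤_U h meets E infinitely, every infinite X with
ν_X ≤_{U'} h meets E' infinitely, and every infinite X satisfying both is
split by E. -/
theorem stmt_13 (U U' : Ultrafilter ℕ) (hU : Nonprincipal U) (hU' : Nonprincipal U')
    (hnc : ¬ NearlyCoherent U U') (h : ℕ → ℕ)
    (a : ℕ → ℕ) (ha0 : a 0 = 0) (ha : StrictMono a)
    (hgrow : ∀ n : ℕ, ∀ x : ℕ, x < a n → h x < a (n + 1)) :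
    ∃ K K' : Set ℕ,
      Disjoint (⋃ n ∈ K, Set.Ico (a n) (a (n + 1)))
        (⋃ n ∈ K', Set.Ico (a n) (a (n + 1))) ∧
      (∀ X : Set ℕ, X.Infinite → {n : ℕ | nuX X n ≤ h n} ∈ U →
        (X ∩ ⋃ n ∈ K, Set.Ico (a n) (a (n + 1))).Infinite) ∧
      (∀ X : Set ℕ, X.Infinite → {n : ℕ | nuX X n ≤ h n} ∈ U' →
        (X ∩ ⋃ n ∈ K', Set.Ico (a n) (a (n + 1))).Infinite) ∧
      (∀ X : Set ℕ, X.Infinite → {n : ℕ | nuX X n ≤ h n} ∈ U →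
        {n : ℕ | nuX X n ≤ h n} ∈ U' →
        (X ∩ ⋃ n ∈ K, Set.Ico (a n) (a (n + 1))).Infinite ∧
        (X \ ⋃ n ∈ K, Set.Ico (a n) (a (n + 1))).Infinite) := by
  have hf := finToOne_blockIdx ha0 ha
  obtain ⟨A, hA, A', hA', hAA'⟩ := exists_disjoint_withSucc (V := U.map (blockIdx a))
    (W := U'.map (blockIdx a)) fun g hg he =>
      hnc ⟨_, _, hf, hg.comp hf, he.trans (Ultrafilter.map_map _ _ _)⟩
  have hdisj := disjoint_blockUnion ha hAA'
  have hE := infinite_inter_blockUnion_withSucc hU ha0 ha hgrow hA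
  have hE' := infinite_inter_blockUnion_withSucc hU' ha0 ha hgrow hA'
  refine ⟨withSucc A, withSucc A', hdisj, hE, hE', fun X hX hXU hXU' => ⟨hE X hX hXU, ?_⟩⟩
  exact (hE' X hX hXU').mono fun y hy => ⟨hy.1, fun hyE => disjoint_left.1 hdisj hyE hy.2⟩
end

section
/- Let U be a nonprincipal ultrafilter on ℕ that is a pseudo-P_κ point with κ > 𝔟, and let C be a family of monotone non-decreasing functions ℕ → ℕ of cardinality 𝔟 such that for every f : ℕ → ℕ there is g ∈ C with f(n) ≤ g(n) for infinitely many n. Then C is cofinal with respect to ≤_U, i.e., for every h : ℕ → ℕ there is g ∈ C with h ≤_U g, that is, {n : h(n) ≤ g(n)} ∈ U. -/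
open Cardinal Set Filter

/-- If U is a pseudo-P_κ point with κ > 𝔟 and C is an unbounded family of
monotone functions of cardinality 𝔟, then C is cofinal with respect to ≤_U. -/
theorem stmt_14 (U : Ultrafilter ℕ) (hU : Nonprincipal U) (κ : Cardinal)
    (hκ : boundingNumber < κ) (hP : PseudoPPoint U κ)
    (C : Set (ℕ → ℕ)) (hmono : ∀ g ∈ C, Monotone g)
    (hcard : #C = boundingNumber)
    (hunb : ∀ f : ℕ → ℕ, ∃ g ∈ C, {n : ℕ | f n ≤ g n}.Infinite) :
    UCofinal U C := by
  intro f
  by_contra hcon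
  push_neg at hcon
  set B : (ℕ → ℕ) → Set ℕ := fun g => {n | f n ≤ g n}ᶜ with hB
  have hBU : ∀ g ∈ C, B g ∈ U := fun g hg =>
    Ultrafilter.compl_mem_iff_notMem.mpr (hcon g hg)
  have hF : #(B '' C) < κ := lt_of_le_of_lt Cardinal.mk_image_le (hcard ▸ hκ)
  obtain ⟨A, hAinf, hAB⟩ := hP (B '' C) (by rintro _ ⟨g, hg, rfl⟩; exact hBU g hg) hF
  have hnu : ∀ n, nuX A n ∈ A ∧ n < nuX A n := by
    intro n
    have hne : {m | m ∈ A ∧ n < m}.Nonempty := by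
      obtain ⟨m, hm, hnm⟩ := hAinf.exists_gt n
      exact ⟨m, hm, hnm⟩
    exact Nat.sInf_mem hne
  obtain ⟨g, hgC, hS⟩ := hunb (fun n => f (nuX A n))
  have hfin : (A \ B g).Finite := hAB _ ⟨g, hgC, rfl⟩
  have hsub : nuX A '' {n | f (nuX A n) ≤ g n} ⊆ A \ B g := by
    rintro _ ⟨n, hn, rfl⟩
    refine ⟨(hnu n).1, ?_⟩
    simp only [hB, Set.mem_compl_iff, Set.mem_setOf_eq, not_not]
    exact le_trans hn (hmono g hgC (le_of_lt (hnu n).2))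
  have hTinf : (nuX A '' {n | f (nuX A n) ≤ g n}).Infinite := by
    apply Set.infinite_of_not_bddAbove
    rintro ⟨b, hb⟩
    obtain ⟨n, hn, hbn⟩ := hS.exists_gt b
    have h1 := hb ⟨n, hn, rfl⟩
    have h2 := (hnu n).2
    omega
  exact hTinf (hfin.subset hsub)
end
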